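/- arXiv:0807.3704 — 7 statements merged into one kernel-verified Lean document; each statement's English description precedes it below -/
import Mathlib

section
/- The map T(m,n,p) : I(m,n,p) → J(m,n,p) defined by T(m,n,p)(t,s) = (max{m+p, n+s} - t, s) is a well-defined bijection with inverse T(p,n,m), where I(m,n,p) = {(t,s) : |m-n|+k ≤ t ≤ m+n-k, |t-p|+k ≤ s ≤ t+p-k} and J(m,n,p) = {(v,u) : |n-p|+k ≤ v ≤ n+p-k, |m-v|+k ≤ u ≤ m+v-k}. -/
/-!
The conditions defining `I(m,n,p)` and `J(m,n,p)` say that the triples `(m,n,t), (t,p,s)`,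
respectively `(n,p,v), (m,v,u)`, satisfy the triangle inequalities with defect `k`. That `T(m,n,p)`
carries the first pair of conditions to the second is a linear-arithmetic check on the two cases
of the maximum. Since `max (m+p) (n+s)` is symmetric in `m, p` and `T` fixes `s`, `T(p,n,m)` undoes
`T(m,n,p)` on all of `ℤ × ℤ`; and since `J(m,n,p) = I(p,n,m)`, the converse inclusion is the first
one with `m` and `p` exchanged.
-/

/-- The index set `I(m,n,p)` of Proposition 3.1(1). -/
def Iset (k m n p : ℤ) : Set (ℤ × ℤ) :=
  {ts | |m - n| + k ≤ ts.1 ∧ ts.1 ≤ m + n - k ∧ |ts.1 - p| + k ≤ ts.2 ∧ ts.2 ≤ ts.1 + p - k}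

/-- The index set `J(m,n,p)` of Proposition 3.1(1). -/
def Jset (k m n p : ℤ) : Set (ℤ × ℤ) :=
  {vu | |n - p| + k ≤ vu.1 ∧ vu.1 ≤ n + p - k ∧ |m - vu.1| + k ≤ vu.2 ∧ vu.2 ≤ m + vu.1 - k}

/-- The map `T(m,n,p)(t,s) = (max{m+p, n+s} - t, s)`. -/
def Tmap (m n p : ℤ) (ts : ℤ × ℤ) : ℤ × ℤ := (max (m + p) (n + ts.2) - ts.1, ts.2)

def Admissible (k a b c : ℤ) : Prop :=
  a + k ≤ b + c ∧ b + k ≤ a + c ∧ c + k ≤ a + b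

theorem abs_sub_add_le_and_le_add_sub_iff_admissible (k a b c : ℤ) :
    (|a - b| + k ≤ c ∧ c ≤ a + b - k) ↔ Admissible k a b c := by
  rw [Admissible, ← le_sub_iff_add_le, abs_sub_le_iff]
  omega

theorem mem_Iset_iff {k m n p : ℤ} {ts : ℤ × ℤ} :
    ts ∈ Iset k m n p ↔ Admissible k m n ts.1 ∧ Admissible k ts.1 p ts.2 := by
  simp only [← abs_sub_add_le_and_le_add_sub_iff_admissible, and_assoc]
  rfl

theorem mem_Jset_iff {k m n p : ℤ} {vu : ℤ × ℤ} :
    vu ∈ Jset k m n p ↔ Admissible k n p vu.1 ∧ Admissible k m vu.1 vu.2 := by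
  simp only [← abs_sub_add_le_and_le_add_sub_iff_admissible, and_assoc]
  rfl

theorem Jset_eq_Iset (k m n p : ℤ) : Jset k m n p = Iset k p n m := by
  ext ⟨v, u⟩
  simp only [Jset, Iset, Set.mem_ofPred_eq]
  rw [abs_sub_comm n p, abs_sub_comm m v, add_comm n p, add_comm m v]

theorem Admissible.recouple {k m n p t s : ℤ} (hmnt : Admissible k m n t)
    (htps : Admissible k t p s) :
    Admissible k n p (max (m + p) (n + s) - t) ∧ Admissible k m (max (m + p) (n + s) - t) s := by
  unfold Admissible at *
  omega

theorem Tmap_mem_Jset {k m n p : ℤ} {ts : ℤ × ℤ} (h : ts ∈ Iset k m n p) :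
    Tmap m n p ts ∈ Jset k m n p := by
  rw [mem_Iset_iff] at h
  exact mem_Jset_iff.2 (h.1.recouple h.2)

theorem Tmap_Tmap (m n p : ℤ) (ts : ℤ × ℤ) : Tmap p n m (Tmap m n p ts) = ts := by
  simp [Tmap, add_comm p m]

theorem stmt1_general (k m n p : ℤ) :
    (∀ ts ∈ Iset k m n p, Tmap m n p ts ∈ Jset k m n p) ∧
    (∀ ts ∈ Iset k m n p, Tmap p n m (Tmap m n p ts) = ts) ∧
    (∀ vu ∈ Jset k m n p, Tmap p n m vu ∈ Iset k m n p) ∧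
    (∀ vu ∈ Jset k m n p, Tmap m n p (Tmap p n m vu) = vu) := by
  refine ⟨fun _ => Tmap_mem_Jset, fun ts _ => Tmap_Tmap m n p ts, fun vu hvu => ?_,
    fun vu _ => Tmap_Tmap p n m vu⟩
  rw [Jset_eq_Iset] at hvu
  rw [← Jset_eq_Iset]
  exact Tmap_mem_Jset hvu

/-- `T(m,n,p) : I(m,n,p) → J(m,n,p)` is a well-defined bijection with inverse `T(p,n,m)`. -/
theorem stmt1 (k m n p : ℤ) (hk : 0 ≤ k) (hm : k ≤ m) (hn : k ≤ n) (hp : k ≤ p) :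
    (∀ ts ∈ Iset k m n p, Tmap m n p ts ∈ Jset k m n p) ∧
    (∀ ts ∈ Iset k m n p, Tmap p n m (Tmap m n p ts) = ts) ∧
    (∀ vu ∈ Jset k m n p, Tmap p n m vu ∈ Iset k m n p) ∧
    (∀ vu ∈ Jset k m n p, Tmap m n p (Tmap p n m vu) = vu) :=
  stmt1_general k m n p
end

section
/- Let A be a finite pre-von Neumann algebra with completion H, left and right regular representations λ, ρ, and set M^λ = λ(A)'' and M^ρ = ρ(A)''. Then M^λ and M^ρ are commutants of each other: (M^λ)' = M^ρ and (M^ρ)' = M^λ. -/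
/-!
Let `J` be the conjugation `ι a ↦ ι (star a)`; the trace property makes it isometric, so it
extends to limits. For `x ∈ λ(A)'` and `y ∈ ρ(A)'` put `ξ = x (ι 1)` and `η = y (ι 1)`. Then
`x (ι a) = λ a ξ`, `y (ι a) = ρ a η`, and `x† (ι 1) = J ξ`, `y† (ι 1) = J η`, so
`⟪ι b, x y (ι a)⟫ = ⟪λ b (J ξ), ρ a η⟫` and `⟪ι b, y x (ι a)⟫ = ⟪ρ b (J η), λ a ξ⟫`. For
`ξ = ι d` both equal `⟪ι (b d* a*), η⟫`, and approximating `ξ` gives the general case. Hence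
`λ(A)' ⊆ ρ(A)''`; together with `ρ(A) ⊆ λ(A)'` this gives `λ(A)' = ρ(A)''`, and symmetrically.
-/

open Filter Topology
open scoped InnerProductSpace InnerProduct

theorem Set.centralizer_eq_centralizer_centralizer {M : Type*} [Mul M] {S T : Set M}
    (hTS : T ⊆ S.centralizer) (hST : S.centralizer ⊆ T.centralizer.centralizer) :
    S.centralizer = T.centralizer.centralizer :=
  hST.antisymm <| by
    simpa only [Set.centralizer_centralizer_centralizer] using
      Set.centralizer_subset (Set.centralizer_subset hTS)

theorem DenseRange.exists_seq_tendsto {α X : Type*} [TopologicalSpace X] [FrechetUrysohnSpace X]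
    {f : α → X} (hf : DenseRange f) (x : X) : ∃ u : ℕ → α, Tendsto (f ∘ u) atTop (𝓝 x) := by
  obtain ⟨v, hv, hlim⟩ := mem_closure_iff_seq_limit.1 (hf x)
  choose u hu using hv
  exact ⟨u, (funext hu : f ∘ u = v) ▸ hlim⟩

theorem DenseRange.continuousLinearMap_ext {α E : Type*} [NormedAddCommGroup E]
    [NormedSpace ℂ E] {f : α → E} (hf : DenseRange f) {S T : E →L[ℂ] E}
    (h : ∀ a, S (f a) = T (f a)) : S = T :=
  DFunLike.coe_injective <| hf.equalizer S.continuous T.continuous (funext h)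

theorem ContinuousLinearMap.adjoint_mem_centralizer_range {α E : Type*} [Star α]
    [NormedAddCommGroup E] [InnerProductSpace ℂ E] [CompleteSpace E] {op : α → E →L[ℂ] E}
    (hadj : ∀ e, (op e)† = op (star e)) {x : E →L[ℂ] E}
    (hx : x ∈ (Set.range op).centralizer) : x† ∈ (Set.range op).centralizer := by
  rw [← ContinuousLinearMap.star_eq_adjoint]
  refine Set.star_mem_centralizer' ?_ hx
  rintro _ ⟨e, rfl⟩
  exact ⟨star e, by rw [ContinuousLinearMap.star_eq_adjoint, hadj]⟩

section PreVonNeumann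

variable {A : Type*} [Ring A] [Module ℂ A]
  {H : Type*} [NormedAddCommGroup H] [InnerProductSpace ℂ H]
  {ι : A →ₗ[ℂ] H} {lam rho : A → H →L[ℂ] H}

theorem lam_mul_rho (hdense : DenseRange ι) (hlam : ∀ a b : A, lam a (ι b) = ι (a * b))
    (hrho : ∀ a b : A, rho a (ι b) = ι (b * a)) (a b : A) :
    lam a * rho b = rho b * lam a :=
  hdense.continuousLinearMap_ext fun e => by
    simp only [mul_apply_eq_comp, hlam, hrho, mul_assoc]

theorem apply_eq_of_mem_centralizer {op : A → H →L[ℂ] H} (hop : ∀ e, op e (ι 1) = ι e)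
    {x : H →L[ℂ] H} (hx : x ∈ (Set.range op).centralizer) (e : A) :
    x (ι e) = op e (x (ι 1)) := by
  rw [← hop, ← mul_apply_eq_comp, ← hx (op e) ⟨e, rfl⟩, mul_apply_eq_comp]

variable [StarRing A] {t : A →ₗ[ℂ] ℂ}

/-- `IsConjVector ι ξ ξ'` says that `ξ' = J ξ` for the conjugation `J (ι a) = ι (star a)`. -/
def IsConjVector (ι : A →ₗ[ℂ] H) (ξ ξ' : H) : Prop :=
  ∀ e : A, ⟪ι e, ξ'⟫_ℂ = ⟪ξ, ι (star e)⟫_ℂ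

theorem IsConjVector.eq (hdense : DenseRange ι) {ξ ξ₁ ξ₂ : H} (h₁ : IsConjVector ι ξ ξ₁)
    (h₂ : IsConjVector ι ξ ξ₂) : ξ₁ = ξ₂ :=
  hdense.eq_of_inner_right ℂ fun e => (h₁ e).trans (h₂ e).symm

theorem inner_map_star_map_star (hip : ∀ a b : A, ⟪ι b, ι a⟫_ℂ = t (star b * a))
    (htr : ∀ a b : A, t (a * b) = t (b * a)) (a b : A) :
    ⟪ι (star a), ι (star b)⟫_ℂ = ⟪ι b, ι a⟫_ℂ := by
  rw [hip, hip, star_star, htr]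

theorem dist_map_star_map_star (hip : ∀ a b : A, ⟪ι b, ι a⟫_ℂ = t (star b * a))
    (htr : ∀ a b : A, t (a * b) = t (b * a)) (a b : A) :
    dist (ι (star a)) (ι (star b)) = dist (ι a) (ι b) := by
  have h := inner_map_star_map_star hip htr (a - b) (a - b)
  rw [inner_self_eq_norm_sq_to_K, inner_self_eq_norm_sq_to_K] at h
  rw [dist_eq_norm, dist_eq_norm, ← map_sub, ← map_sub, ← star_sub]
  exact (pow_left_inj₀ (norm_nonneg _) (norm_nonneg _) two_ne_zero).1 (by exact_mod_cast h)

theorem tendsto_map_star [CompleteSpace H] (hdense : DenseRange ι)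
    (hip : ∀ a b : A, ⟪ι b, ι a⟫_ℂ = t (star b * a))
    (htr : ∀ a b : A, t (a * b) = t (b * a)) {d : ℕ → A} {ξ ξ' : H}
    (hd : Tendsto (ι ∘ d) atTop (𝓝 ξ)) (hξ' : IsConjVector ι ξ ξ') :
    Tendsto (fun n => ι (star (d n))) atTop (𝓝 ξ') := by
  have hcauchy : CauchySeq fun n => ι (star (d n)) := by
    simpa only [Metric.cauchySeq_iff, Function.comp_apply, dist_map_star_map_star hip htr] using
      hd.cauchySeq
  obtain ⟨v, hv⟩ := cauchySeq_tendsto_of_complete hcauchy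
  suffices hv' : IsConjVector ι ξ v from hv'.eq hdense hξ' ▸ hv
  intro e
  have hlhs : Tendsto (fun n => ⟪ι e, ι (star (d n))⟫_ℂ) atTop (𝓝 ⟪ι e, v⟫_ℂ) :=
    tendsto_const_nhds.inner hv
  have hrhs : Tendsto (fun n => ⟪ι (d n), ι (star e)⟫_ℂ) atTop (𝓝 ⟪ξ, ι (star e)⟫_ℂ) :=
    hd.inner tendsto_const_nhds
  refine tendsto_nhds_unique hlhs (hrhs.congr fun n => ?_)
  simpa only [star_star] using (inner_map_star_map_star hip htr (star e) (d n)).symm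

variable [CompleteSpace H]

theorem isConjVector_adjoint_apply_one {op : A → H →L[ℂ] H} (hop : ∀ e, op e (ι 1) = ι e)
    (hadj : ∀ e, (op e)† = op (star e)) {x : H →L[ℂ] H} (hx : x ∈ (Set.range op).centralizer) :
    IsConjVector ι (x (ι 1)) ((x†) (ι 1)) := fun e => by
  rw [ContinuousLinearMap.adjoint_inner_right, apply_eq_of_mem_centralizer hop hx,
    ← ContinuousLinearMap.adjoint_inner_right, hadj, hop]

theorem adjoint_lam (hdense : DenseRange ι) (hip : ∀ a b : A, ⟪ι b, ι a⟫_ℂ = t (star b * a))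
    (hlam : ∀ a b : A, lam a (ι b) = ι (a * b)) (c : A) : (lam c)† = lam (star c) :=
  hdense.continuousLinearMap_ext fun e => hdense.eq_of_inner_right ℂ fun b => by
    rw [ContinuousLinearMap.adjoint_inner_right, hlam, hlam, hip, hip, star_mul, mul_assoc]

theorem adjoint_rho (hdense : DenseRange ι) (hip : ∀ a b : A, ⟪ι b, ι a⟫_ℂ = t (star b * a))
    (htr : ∀ a b : A, t (a * b) = t (b * a)) (hrho : ∀ a b : A, rho a (ι b) = ι (b * a))
    (c : A) : (rho c)† = rho (star c) :=
  hdense.continuousLinearMap_ext fun e => hdense.eq_of_inner_right ℂ fun b => by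
    rw [ContinuousLinearMap.adjoint_inner_right, hrho, hrho, hip, hip, star_mul, mul_assoc,
      htr, mul_assoc]

theorem inner_lam_rho_eq_inner_rho_lam (hdense : DenseRange ι)
    (hip : ∀ a b : A, ⟪ι b, ι a⟫_ℂ = t (star b * a)) (htr : ∀ a b : A, t (a * b) = t (b * a))
    (hlam : ∀ a b : A, lam a (ι b) = ι (a * b)) (hrho : ∀ a b : A, rho a (ι b) = ι (b * a))
    {ξ ξ' η η' : H} (hξ : IsConjVector ι ξ ξ') (hη : IsConjVector ι η η') (a b : A) :
    ⟪lam b ξ', rho a η⟫_ℂ = ⟪rho b η', lam a ξ⟫_ℂ := by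
  obtain ⟨d, hd⟩ := hdense.exists_seq_tendsto ξ
  have hd' := tendsto_map_star hdense hip htr hd hξ
  have hterm : ∀ n, ⟪lam b (ι (star (d n))), rho a η⟫_ℂ = ⟪rho b η', lam a (ι (d n))⟫_ℂ := by
    intro n
    -- both sides equal `⟪ι (b * star (d n) * star a), η⟫`
    rw [hlam, hlam, ← ContinuousLinearMap.adjoint_inner_left, adjoint_rho hdense hip htr hrho,
      hrho, ← ContinuousLinearMap.adjoint_inner_right, adjoint_rho hdense hip htr hrho, hrho,
      ← inner_conj_symm η', hη, inner_conj_symm]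
    simp only [star_mul, star_star, mul_assoc]
  have hlhs : Tendsto (fun n => ⟪lam b (ι (star (d n))), rho a η⟫_ℂ) atTop
      (𝓝 ⟪lam b ξ', rho a η⟫_ℂ) :=
    (((lam b).continuous.tendsto ξ').comp hd').inner tendsto_const_nhds
  have hrhs : Tendsto (fun n => ⟪rho b η', lam a (ι (d n))⟫_ℂ) atTop
      (𝓝 ⟪rho b η', lam a ξ⟫_ℂ) :=
    tendsto_const_nhds.inner (((lam a).continuous.tendsto ξ).comp hd)
  exact tendsto_nhds_unique hlhs (hrhs.congr fun n => (hterm n).symm)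

theorem commute_of_mem_centralizer_lam_of_mem_centralizer_rho (hdense : DenseRange ι)
    (hip : ∀ a b : A, ⟪ι b, ι a⟫_ℂ = t (star b * a)) (htr : ∀ a b : A, t (a * b) = t (b * a))
    (hlam : ∀ a b : A, lam a (ι b) = ι (a * b)) (hrho : ∀ a b : A, rho a (ι b) = ι (b * a))
    {x y : H →L[ℂ] H} (hx : x ∈ (Set.range lam).centralizer)
    (hy : y ∈ (Set.range rho).centralizer) : Commute x y := by
  have hlam₁ : ∀ e, lam e (ι 1) = ι e := fun e => by rw [hlam, mul_one]
  have hrho₁ : ∀ e, rho e (ι 1) = ι e := fun e => by rw [hrho, one_mul]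
  have hlam_adj := adjoint_lam hdense hip hlam
  have hrho_adj := adjoint_rho hdense hip htr hrho
  refine hdense.continuousLinearMap_ext fun a => hdense.eq_of_inner_right ℂ fun b => ?_
  calc ⟪ι b, x (y (ι a))⟫_ℂ = ⟪(x†) (ι b), y (ι a)⟫_ℂ :=
        (ContinuousLinearMap.adjoint_inner_left _ _ _).symm
    _ = ⟪lam b ((x†) (ι 1)), rho a (y (ι 1))⟫_ℂ := by
        rw [apply_eq_of_mem_centralizer hlam₁
            (ContinuousLinearMap.adjoint_mem_centralizer_range hlam_adj hx) b,
          apply_eq_of_mem_centralizer hrho₁ hy a]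
    _ = ⟪rho b ((y†) (ι 1)), lam a (x (ι 1))⟫_ℂ :=
        inner_lam_rho_eq_inner_rho_lam hdense hip htr hlam hrho
          (isConjVector_adjoint_apply_one hlam₁ hlam_adj hx)
          (isConjVector_adjoint_apply_one hrho₁ hrho_adj hy) a b
    _ = ⟪(y†) (ι b), x (ι a)⟫_ℂ := by
        rw [apply_eq_of_mem_centralizer hrho₁
            (ContinuousLinearMap.adjoint_mem_centralizer_range hrho_adj hy) b,
          apply_eq_of_mem_centralizer hlam₁ hx a]
    _ = ⟪ι b, y (x (ι a))⟫_ℂ := ContinuousLinearMap.adjoint_inner_left _ _ _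

end PreVonNeumann

theorem stmt7_general (A : Type*) [Ring A] [Algebra ℂ A] [StarRing A]
    (H : Type*) [NormedAddCommGroup H] [InnerProductSpace ℂ H] [CompleteSpace H]
    (t : A →ₗ[ℂ] ℂ) (ι : A →ₗ[ℂ] H)
    (hdense : DenseRange ι)
    (hip : ∀ a b : A, (inner ℂ (ι b) (ι a) : ℂ) = t (star b * a))
    (htr : ∀ a b : A, t (a * b) = t (b * a))
    (lam : A → H →L[ℂ] H) (hlam : ∀ a b : A, lam a (ι b) = ι (a * b))
    (rho : A → H →L[ℂ] H) (hrho : ∀ a b : A, rho a (ι b) = ι (b * a)) :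
    Set.centralizer (Set.centralizer (Set.centralizer (Set.range lam))) =
      Set.centralizer (Set.centralizer (Set.range rho)) ∧
    Set.centralizer (Set.centralizer (Set.centralizer (Set.range rho))) =
      Set.centralizer (Set.centralizer (Set.range lam)) := by
  have hcomm : ∀ x ∈ (Set.range lam).centralizer, ∀ y ∈ (Set.range rho).centralizer,
      Commute x y := fun _ hx _ hy =>
    commute_of_mem_centralizer_lam_of_mem_centralizer_rho hdense hip htr hlam hrho hx hy
  rw [Set.centralizer_centralizer_centralizer, Set.centralizer_centralizer_centralizer]
  constructor
  · refine Set.centralizer_eq_centralizer_centralizer ?_ fun x hx y hy => (hcomm x hx y hy).eq.symm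
    rintro _ ⟨b, rfl⟩ _ ⟨a, rfl⟩
    exact lam_mul_rho hdense hlam hrho a b
  · refine Set.centralizer_eq_centralizer_centralizer ?_ fun y hy x hx => (hcomm x hx y hy).eq
    rintro _ ⟨a, rfl⟩ _ ⟨b, rfl⟩
    exact (lam_mul_rho hdense hlam hrho a b).symm

/-- Let `A` be a finite pre-von Neumann algebra realized by its GNS embedding
`ι : A → H` (dense range, `⟪ι b, ι a⟫ = t(b* a)`), with `λ, ρ : A → B(H)` the bounded
extensions of left and right multiplication. Then `M^λ = λ(A)''` and `M^ρ = ρ(A)''`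
are commutants of each other. -/
theorem stmt7 (A : Type*) [Ring A] [Algebra ℂ A] [StarRing A]
    (H : Type*) [NormedAddCommGroup H] [InnerProductSpace ℂ H] [CompleteSpace H]
    (t : A →ₗ[ℂ] ℂ) (ι : A →ₗ[ℂ] H)
    (hdense : DenseRange ι) (hinj : Function.Injective ι)
    (hip : ∀ a b : A, (inner ℂ (ι b) (ι a) : ℂ) = t (star b * a))
    (ht1 : t 1 = 1) (htr : ∀ a b : A, t (a * b) = t (b * a))
    (lam : A → H →L[ℂ] H) (hlam : ∀ a b : A, lam a (ι b) = ι (a * b))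
    (rho : A → H →L[ℂ] H) (hrho : ∀ a b : A, rho a (ι b) = ι (b * a)) :
    Set.centralizer (Set.centralizer (Set.centralizer (Set.range lam))) =
      Set.centralizer (Set.centralizer (Set.range rho)) ∧
    Set.centralizer (Set.centralizer (Set.centralizer (Set.range rho))) =
      Set.centralizer (Set.centralizer (Set.range lam)) :=
  stmt7_general A H t ι hdense hip htr lam hlam rho hrho
end

section
/- Let A be a finite pre-von Neumann algebra with completion H and vacuum vector Ω, and let M^λ = λ(A)''. Then the vector state t(x) = ⟨xΩ, Ω⟩ restricted to M^λ is a faithful normal tracial state extending the trace of A. -/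
/-! Traciality gives `‖ι (star a)‖ = ‖ι a‖`, so `a ↦ star a` extends to a conjugate-linear
isometry `J` of `H`, and `ρ(b) = J λ(star b) J` is right multiplication by `b`, which commutes
with `λ(A)`. Hence every `x ∈ λ(A)''` satisfies `x (ι c) = ρ(c) (x Ω)`: `x` is determined by
`x Ω`, which gives faithfulness, and `⟪Ω, x ξ⟫ = ⟪J ξ, x Ω⟫`. The form `(ξ, η) ↦ ⟪J ξ, η⟫`
extends `(a, b) ↦ t (a b)` and is therefore symmetric, so
`T (x y) = ⟪J (y Ω), x Ω⟫ = ⟪J (x Ω), y Ω⟫ = T (y x)`.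
Positivity and weak-operator continuity hold for every vector state. -/

open scoped InnerProductSpace ComplexConjugate

namespace FinitePreVonNeumann

variable {A : Type*} [Ring A] [Algebra ℂ A] [StarRing A]
  {H : Type*} [NormedAddCommGroup H] [InnerProductSpace ℂ H]

structure IsTracialGNSMap (t : A →ₗ[ℂ] ℂ) (ι : A →ₗ[ℂ] H) : Prop where
  inner_map_map : ∀ a b : A, ⟪ι b, ι a⟫_ℂ = t (star b * a)
  trace_mul_comm : ∀ a b : A, t (a * b) = t (b * a)

variable {t : A →ₗ[ℂ] ℂ} {ι : A →ₗ[ℂ] H}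

theorem IsTracialGNSMap.inner_map_star_comm (h : IsTracialGNSMap t ι) (a b : A) :
    ⟪ι (star a), ι b⟫_ℂ = ⟪ι (star b), ι a⟫_ℂ := by
  rw [h.inner_map_map, h.inner_map_map, star_star, star_star, h.trace_mul_comm]

theorem IsTracialGNSMap.norm_map_star (h : IsTracialGNSMap t ι) (a : A) :
    ‖ι (star a)‖ = ‖ι a‖ := by
  rw [norm_eq_sqrt_re_inner (𝕜 := ℂ), norm_eq_sqrt_re_inner (𝕜 := ℂ), h.inner_map_star_comm,
    star_star]

/- `A` carries no `StarModule` instance: conjugate-linearity of `a ↦ ι (star a)` is read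
off from the inner products with the dense range of `ι`. -/
theorem IsTracialGNSMap.map_star_smul (h : IsTracialGNSMap t ι) (hdense : DenseRange ι)
    (c : ℂ) (a : A) : ι (star (c • a)) = conj c • ι (star a) :=
  hdense.eq_of_inner_left (𝕜 := ℂ) fun d => by
    rw [h.inner_map_star_comm, map_smul, inner_smul_right, inner_smul_left,
      h.inner_map_star_comm, Complex.conj_conj]

theorem IsTracialGNSMap.exists_extension_map_star [CompleteSpace H] (h : IsTracialGNSMap t ι)
    (hdense : DenseRange ι) : ∃ J : H →L⋆[ℂ] H, ∀ a, J (ι a) = ι (star a) := by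
  let f : A →ₗ⋆[ℂ] H :=
    { toFun := fun a => ι (star a)
      map_add' := fun a b => by rw [star_add, map_add]
      map_smul' := h.map_star_smul hdense }
  have hf : ∃ C, ∀ a, ‖f a‖ ≤ C * ‖ι a‖ :=
    ⟨1, fun a => by rw [one_mul]; exact (h.norm_map_star a).le⟩
  exact ⟨f.extendOfNorm ι, LinearMap.extendOfNorm_eq hdense hf⟩

variable {J : H →L⋆[ℂ] H}

theorem IsTracialGNSMap.inner_conj_apply_comm (h : IsTracialGNSMap t ι) (hdense : DenseRange ι)
    (hJ : ∀ a, J (ι a) = ι (star a)) (ξ η : H) : ⟪J ξ, η⟫_ℂ = ⟪J η, ξ⟫_ℂ := by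
  refine congrFun ((hdense.prodMap hdense).equalizer (g := fun p : H × H => ⟪J p.1, p.2⟫_ℂ)
    (h := fun p : H × H => ⟪J p.2, p.1⟫_ℂ) (by fun_prop) (by fun_prop) (funext fun p => ?_))
    (ξ, η)
  simp only [Function.comp_apply, Prod.map_fst, Prod.map_snd, hJ]
  exact h.inner_map_star_comm _ _

def rightMul (J : H →L⋆[ℂ] H) (lam : A → H →L[ℂ] H) (b : A) : H →L[ℂ] H :=
  (J.comp (lam (star b))).comp J

variable {lam : A → H →L[ℂ] H}

theorem rightMul_apply_map (hJ : ∀ a, J (ι a) = ι (star a))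
    (hlam : ∀ a b : A, lam a (ι b) = ι (a * b)) (b c : A) :
    rightMul J lam b (ι c) = ι (c * b) := by
  simp [rightMul, hJ, hlam]

theorem rightMul_mem_centralizer (hdense : DenseRange ι) (hJ : ∀ a, J (ι a) = ι (star a))
    (hlam : ∀ a b : A, lam a (ι b) = ι (a * b)) (b : A) :
    rightMul J lam b ∈ Set.centralizer (Set.range lam) := by
  rintro _ ⟨a, rfl⟩
  refine ContinuousLinearMap.coeFn_injective <| hdense.equalizer (by fun_prop) (by fun_prop) ?_
  funext c
  simp [rightMul_apply_map hJ hlam, hlam, mul_assoc]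

theorem IsTracialGNSMap.inner_map_one_rightMul (h : IsTracialGNSMap t ι) (hdense : DenseRange ι)
    (hJ : ∀ a, J (ι a) = ι (star a)) (hlam : ∀ a b : A, lam a (ι b) = ι (a * b)) (b : A)
    (ξ : H) : ⟪ι 1, rightMul J lam b ξ⟫_ℂ = ⟪J (ι b), ξ⟫_ℂ := by
  refine congrFun (hdense.equalizer (g := fun ξ => ⟪ι 1, rightMul J lam b ξ⟫_ℂ)
    (h := fun ξ => ⟪J (ι b), ξ⟫_ℂ) (by fun_prop) (by fun_prop) (funext fun c => ?_)) ξ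
  rw [Function.comp_apply, Function.comp_apply, rightMul_apply_map hJ hlam, hJ,
    h.inner_map_map, h.inner_map_map, star_one, one_mul, star_star, h.trace_mul_comm]

variable {x y : H →L[ℂ] H}

theorem apply_map_eq_rightMul_apply (hdense : DenseRange ι) (hJ : ∀ a, J (ι a) = ι (star a))
    (hlam : ∀ a b : A, lam a (ι b) = ι (a * b))
    (hx : x ∈ Set.centralizer (Set.centralizer (Set.range lam))) (c : A) :
    x (ι c) = rightMul J lam c (x (ι 1)) := by
  have hcomm := DFunLike.congr_fun (hx _ (rightMul_mem_centralizer hdense hJ hlam c)) (ι 1)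
  rwa [mul_apply_eq_comp, mul_apply_eq_comp, rightMul_apply_map hJ hlam, one_mul, eq_comm]
    at hcomm

theorem eq_zero_of_apply_map_one_eq_zero (hdense : DenseRange ι)
    (hJ : ∀ a, J (ι a) = ι (star a)) (hlam : ∀ a b : A, lam a (ι b) = ι (a * b))
    (hx : x ∈ Set.centralizer (Set.centralizer (Set.range lam))) (h : x (ι 1) = 0) : x = 0 :=
  ContinuousLinearMap.coeFn_injective <| hdense.equalizer x.continuous continuous_const <|
    funext fun c => by
      rw [Function.comp_apply, apply_map_eq_rightMul_apply hdense hJ hlam hx, h, map_zero]; rfl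

theorem IsTracialGNSMap.inner_map_one_apply (h : IsTracialGNSMap t ι) (hdense : DenseRange ι)
    (hJ : ∀ a, J (ι a) = ι (star a)) (hlam : ∀ a b : A, lam a (ι b) = ι (a * b))
    (hx : x ∈ Set.centralizer (Set.centralizer (Set.range lam))) (ξ : H) :
    ⟪ι 1, x ξ⟫_ℂ = ⟪J ξ, x (ι 1)⟫_ℂ := by
  refine congrFun (hdense.equalizer (g := fun ξ => ⟪ι 1, x ξ⟫_ℂ)
    (h := fun ξ => ⟪J ξ, x (ι 1)⟫_ℂ) (by fun_prop) (by fun_prop) (funext fun b => ?_)) ξ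
  rw [Function.comp_apply, Function.comp_apply, apply_map_eq_rightMul_apply hdense hJ hlam hx,
    h.inner_map_one_rightMul hdense hJ hlam]

theorem IsTracialGNSMap.inner_map_one_mul_comm (h : IsTracialGNSMap t ι)
    (hdense : DenseRange ι) (hJ : ∀ a, J (ι a) = ι (star a))
    (hlam : ∀ a b : A, lam a (ι b) = ι (a * b))
    (hx : x ∈ Set.centralizer (Set.centralizer (Set.range lam)))
    (hy : y ∈ Set.centralizer (Set.centralizer (Set.range lam))) :
    ⟪ι 1, (x * y) (ι 1)⟫_ℂ = ⟪ι 1, (y * x) (ι 1)⟫_ℂ := by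
  rw [mul_apply_eq_comp, mul_apply_eq_comp, h.inner_map_one_apply hdense hJ hlam hx,
    h.inner_map_one_apply hdense hJ hlam hy, h.inner_conj_apply_comm hdense hJ]

end FinitePreVonNeumann

open FinitePreVonNeumann

theorem stmt8_general (A : Type*) [Ring A] [Algebra ℂ A] [StarRing A]
    (H : Type*) [NormedAddCommGroup H] [InnerProductSpace ℂ H] [CompleteSpace H]
    (t : A →ₗ[ℂ] ℂ) (ι : A →ₗ[ℂ] H)
    (hdense : DenseRange ι)
    (hip : ∀ a b : A, (inner ℂ (ι b) (ι a) : ℂ) = t (star b * a))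
    (ht1 : t 1 = 1) (htr : ∀ a b : A, t (a * b) = t (b * a))
    (lam : A → H →L[ℂ] H) (hlam : ∀ a b : A, lam a (ι b) = ι (a * b)) :
    let Mlam := Set.centralizer (Set.centralizer (Set.range lam))
    let T : (H →L[ℂ] H) → ℂ := fun x => inner ℂ (ι 1) (x (ι 1))
    -- state:
    (T 1 = 1) ∧
    (∀ x ∈ Mlam, 0 ≤ (T (star x * x)).re ∧ (T (star x * x)).im = 0) ∧
    -- tracial:
    (∀ x ∈ Mlam, ∀ y ∈ Mlam, T (x * y) = T (y * x)) ∧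
    -- faithful:
    (∀ x ∈ Mlam, T (star x * x) = 0 → x = 0) ∧
    -- extends the trace of `A`:
    (∀ a : A, T (lam a) = t a) ∧
    -- normal (indeed weak-operator continuous, being a vector state):
    (∀ (It : Type) (l : Filter It) (x : It → (H →L[ℂ] H)) (x₀ : H →L[ℂ] H),
      (∀ ξ η : H, Filter.Tendsto (fun i => (inner ℂ ξ ((x i) η) : ℂ)) l
          (nhds (inner ℂ ξ (x₀ η)))) →
      Filter.Tendsto (fun i => T (x i)) l (nhds (T x₀))) := by
  intro Mlam T
  have hGNS : IsTracialGNSMap t ι := ⟨hip, htr⟩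
  obtain ⟨J, hJ⟩ := hGNS.exists_extension_map_star hdense
  have hsq : ∀ x : H →L[ℂ] H, T (star x * x) = ⟪x (ι 1), x (ι 1)⟫_ℂ :=
    fun x => x.adjoint_inner_right _ _
  refine ⟨?_, fun x _ => ?_, fun x hx y hy => hGNS.inner_map_one_mul_comm hdense hJ hlam hx hy,
    fun x hx h => ?_, fun a => ?_, fun _ _ _ _ h => h _ _⟩
  · change ⟪ι 1, (1 : H →L[ℂ] H) (ι 1)⟫_ℂ = 1
    rw [one_apply_eq_self, hip, star_one, one_mul, ht1]
  · rw [hsq]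
    exact ⟨inner_self_nonneg (𝕜 := ℂ), inner_self_im (𝕜 := ℂ) _⟩
  · exact eq_zero_of_apply_map_one_eq_zero hdense hJ hlam hx
      (inner_self_eq_zero.mp ((hsq x).symm.trans h))
  · change ⟪ι 1, lam a (ι 1)⟫_ℂ = t a
    rw [hlam, hip, star_one, one_mul, mul_one]

/-- Let `A` be a finite pre-von Neumann algebra realized by its GNS embedding
`ι : A → H`, with vacuum vector `Ω = ι 1` and left regular representation
`λ : A → B(H)`, and let `M^λ = λ(A)''`.  Then the vector state `T x = ⟪Ω, x Ω⟫`
restricted to `M^λ` is a faithful normal (here: weak-operator continuous) tracial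
state extending the trace of `A`. -/
theorem stmt8 (A : Type*) [Ring A] [Algebra ℂ A] [StarRing A]
    (H : Type*) [NormedAddCommGroup H] [InnerProductSpace ℂ H] [CompleteSpace H]
    (t : A →ₗ[ℂ] ℂ) (ι : A →ₗ[ℂ] H)
    (hdense : DenseRange ι) (hinj : Function.Injective ι)
    (hip : ∀ a b : A, (inner ℂ (ι b) (ι a) : ℂ) = t (star b * a))
    (ht1 : t 1 = 1) (htr : ∀ a b : A, t (a * b) = t (b * a))
    (lam : A → H →L[ℂ] H) (hlam : ∀ a b : A, lam a (ι b) = ι (a * b)) :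
    let Mlam := Set.centralizer (Set.centralizer (Set.range lam))
    let T : (H →L[ℂ] H) → ℂ := fun x => inner ℂ (ι 1) (x (ι 1))
    -- state:
    (T 1 = 1) ∧
    (∀ x ∈ Mlam, 0 ≤ (T (star x * x)).re ∧ (T (star x * x)).im = 0) ∧
    -- tracial:
    (∀ x ∈ Mlam, ∀ y ∈ Mlam, T (x * y) = T (y * x)) ∧
    -- faithful:
    (∀ x ∈ Mlam, T (star x * x) = 0 → x = 0) ∧
    -- extends the trace of `A`:
    (∀ a : A, T (lam a) = t a) ∧
    -- normal (indeed weak-operator continuous, being a vector state):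
    (∀ (It : Type) (l : Filter It) (x : It → (H →L[ℂ] H)) (x₀ : H →L[ℂ] H),
      (∀ ξ η : H, Filter.Tendsto (fun i => (inner ℂ ξ ((x i) η) : ℂ)) l
          (nhds (inner ℂ ξ (x₀ η)))) →
      Filter.Tendsto (fun i => T (x i)) l (nhds (T x₀))) :=
  stmt8_general A H t ι hdense hip ht1 htr lam hlam
end

section
/- Let A ⊆ B be a compatible pair of finite pre-von Neumann algebras (i.e., A is a unital *-subalgebra of B and the trace of B restricts to the trace of A). Identify the completion H_A as a closed subspace of H_B. Then the inclusion A ⊆ B extends uniquely to a normal unital injective *-homomorphism ι : λ_A(A)'' → λ_B(B)'' whose image is λ_B(A)'', and ι(x)Ω = xΩ for all x ∈ λ_A(A)''. -/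
/-!
Let `ρ(b)` be right multiplication by `b` on `H`. It is bounded because the trace makes `b ↦ b⋆`
isometric, it commutes with every left multiplication, and `Ω` is cyclic for it; so an operator
commuting with all `ρ(b)` is determined by its value at `Ω`. Define `ι(x)` by
`ι(x)(bΩ) = ρ(b)(xΩ)`. It is bounded by `‖x‖`: for `d = ρ(b)` restricted to `H_A`, the positive
operator `d⋆d` lies in `λ_A(A)'`, hence commutes with `x`, and then `‖d xΩ‖ ≤ ‖x‖ ‖dΩ‖`.
Every algebraic property of `ι`, as well as its uniqueness, is an instance of the uniqueness
principle above. For the image one compresses to `H_A`: the compression of `ρ(b')⋆ z ρ(b)` with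
`z ∈ λ_B(A)'` lies in `λ_A(A)'`, which puts `ι(x)` in `λ_B(A)''`, and `y ∈ λ_B(A)''` is `ι` of its
own compression. Normality holds because `‖ι(x)‖ ≤ ‖x‖` and `⟪ξ, ι(x) bΩ⟫ = ⟪P ρ(b)⋆ ξ, xΩ⟫`.
-/

open ContinuousLinearMap Set Filter Topology
open scoped InnerProductSpace

section Hilbert

variable {E F K H : Type*} [NormedAddCommGroup E] [NormedSpace ℂ E]
  [NormedAddCommGroup F] [NormedSpace ℂ F]
  [NormedAddCommGroup K] [InnerProductSpace ℂ K] [NormedAddCommGroup H] [InnerProductSpace ℂ H]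

theorem ContinuousLinearMap.ext_of_denseRange {ι : Type*} {g : ι → E} (hg : DenseRange g)
    {T T' : E →L[ℂ] F} (h : ∀ i, T (g i) = T' (g i)) : T = T' :=
  DFunLike.coe_injective (hg.equalizer T.continuous T'.continuous (funext h))

theorem ContinuousLinearMap.ext_inner_of_denseRange {ι : Type*} {g : ι → H}
    (hg : DenseRange g) {T T' : H →L[ℂ] H} (h : ∀ i j, ⟪g i, T (g j)⟫_ℂ = ⟪g i, T' (g j)⟫_ℂ) :
    T = T' :=
  ext fun v => ext_inner_left ℂ fun u =>
    hg.induction_on₂ (p := fun u v => ⟪u, T v⟫_ℂ = ⟪u, T' v⟫_ℂ)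
      (isClosed_eq (by fun_prop) (by fun_prop)) h u v

theorem ContinuousLinearMap.tendsto_apply_of_denseRange {α ι : Type*} {l : Filter α}
    {T : α → E →L[ℂ] F} {T₀ : E →L[ℂ] F} (hT : ∃ C, ∀ i, ‖T i‖ ≤ C)
    {g : ι → E} (hg : DenseRange g) (h : ∀ j, Tendsto (fun i => T i (g j)) l (𝓝 (T₀ (g j))))
    (v : E) :
    Tendsto (fun i => T i v) l (𝓝 (T₀ v)) := by
  have hequi : Equicontinuous fun i => (T i : E → F) :=
    ((NormedSpace.equicontinuous_TFAE T).out 5 1).1 hT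
  exact hg.induction_on v (hequi.isClosed_setOfPred_tendsto T₀.continuous) h

/-- `c = d†d` is a positive operator commuting with `‖x‖² - x⋆x ≥ 0`, so
`‖d x v‖² = ⟪c x⋆x v, v⟫ ≤ ‖x‖² ⟪c v, v⟫ = ‖x‖² ‖d v‖²`. -/
theorem ContinuousLinearMap.norm_apply_apply_le_of_commute [CompleteSpace K] [CompleteSpace H]
    (d : K →L[ℂ] H) {x : K →L[ℂ] K} (hx : Commute (adjoint d ∘L d) x) (v : K) :
    ‖d (x v)‖ ≤ ‖x‖ * ‖d v‖ := by
  set c := adjoint d ∘L d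
  have hc : 0 ≤ c := (nonneg_iff_isPositive c).2 (isPositive_adjoint_comp_self d)
  have hcx' : Commute c (star x) := by
    simpa only [hc.isSelfAdjoint.star_eq] using hx.star_star
  have hnorm : ∀ w, ‖d w‖ ^ 2 = RCLike.re ⟪c w, w⟫_ℂ := fun w => by
    rw [comp_apply, adjoint_inner_left, inner_self_eq_norm_sq]
  have hpos : 0 ≤ c * (algebraMap ℝ _ (‖x‖ ^ 2) - star x * x) :=
    Commute.mul_nonneg hc (sub_nonneg.2 CStarAlgebra.star_mul_le_algebraMap_norm_sq)
      ((Algebra.commute_algebraMap_right _ _).sub_right (hcx'.mul_right hx))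
  have hsq : ‖d (x v)‖ ^ 2 ≤ (‖x‖ * ‖d v‖) ^ 2 := by
    have := ((nonneg_iff_isPositive _).1 hpos).re_inner_nonneg_left v
    have hswap : star x (c (x v)) = c (star x (x v)) := congrArg (· (x v)) hcx'.eq.symm
    rw [mul_pow, hnorm, hnorm, ← adjoint_inner_left x, ← star_eq_adjoint, hswap]
    simp only [mul_sub, sub_apply] at this
    simpa [inner_sub_left, ← Complex.coe_smul, inner_smul_left, sq, mul_assoc] using this
  exact pow_le_pow_iff_left₀ (norm_nonneg _) (by positivity) two_ne_zero |>.1 hsq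

theorem ContinuousLinearMap.comp_comp_mem_centralizer_of_intertwine {ι : Type*}
    {α : ι → E →L[ℂ] E} {β : ι → F →L[ℂ] F} {X : E →L[ℂ] F} {Y : F →L[ℂ] E}
    (hX : ∀ i v, X (α i v) = β i (X v)) (hY : ∀ i w, Y (β i w) = α i (Y w))
    {z : F →L[ℂ] F} (hz : z ∈ centralizer (range β)) :
    Y ∘L z ∘L X ∈ centralizer (range α) := by
  rintro _ ⟨i, rfl⟩
  ext v
  have hzβ : β i (z (X v)) = z (β i (X v)) := DFunLike.congr_fun (hz (β i) ⟨i, rfl⟩) (X v)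
  change α i (Y (z (X v))) = Y (z (X (α i v)))
  rw [← hY, hzβ, hX]

end Hilbert

/-- A tracial *-algebra `B` in its GNS representation: `vec b` is the vector `bΩ` and `lam` is the
left regular representation. -/
structure TracialGNS (B H : Type*) [Ring B] [Algebra ℂ B] [StarRing B]
    [NormedAddCommGroup H] [InnerProductSpace ℂ H] where
  vec : B →ₗ[ℂ] H
  trace : B →ₗ[ℂ] ℂ
  lam : B → H →L[ℂ] H
  denseRange_vec : DenseRange vec
  inner_vec_vec : ∀ b b', ⟪vec b', vec b⟫_ℂ = trace (star b' * b)
  trace_mul_comm : ∀ b b', trace (b * b') = trace (b' * b)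
  lam_vec : ∀ b b', lam b (vec b') = vec (b * b')

/-- The completion `H_A` of the *-subalgebra `f(A) ⊆ B`, as a subspace of `H`, with the left
regular representation of `A` on it. -/
structure TracialGNS.SubalgebraGNS {A B H : Type*} [Ring A] [Algebra ℂ A] [StarRing A] [Ring B]
    [Algebra ℂ B] [StarRing B] [NormedAddCommGroup H] [InnerProductSpace ℂ H]
    (G : TracialGNS B H) (f : A →⋆ₐ[ℂ] B) where
  K : Submodule ℂ H
  lam : A → K →L[ℂ] K
  vec_mem : ∀ a, G.vec (f a) ∈ K
  coe_eq_closure : (K : Set H) = closure (range fun a => G.vec (f a))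
  lam_vec : ∀ a a', (lam a ⟨G.vec (f a'), vec_mem a'⟩ : H) = G.vec (f (a * a'))

namespace TracialGNS

variable {A B H : Type*} [Ring A] [Algebra ℂ A] [StarRing A] [Ring B] [Algebra ℂ B] [StarRing B]
  [NormedAddCommGroup H] [InnerProductSpace ℂ H] (G : TracialGNS B H)

theorem norm_vec_star (b : B) : ‖G.vec (star b)‖ = ‖G.vec b‖ := by
  have h : ⟪G.vec (star b), G.vec (star b)⟫_ℂ = ⟪G.vec b, G.vec b⟫_ℂ := by
    rw [G.inner_vec_vec, G.inner_vec_vec, star_star, G.trace_mul_comm]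
  rw [norm_eq_sqrt_re_inner (𝕜 := ℂ), norm_eq_sqrt_re_inner (𝕜 := ℂ), h]

theorem norm_vec_mul_le (b b' : B) :
    ‖G.vec (b' * b)‖ ≤ ‖G.lam (star b)‖ * ‖G.vec b'‖ := by
  rw [← G.norm_vec_star, star_mul, ← G.lam_vec, ← G.norm_vec_star b']
  exact le_opNorm _ _

/-- `λ_B(g(α))''`. -/
abbrev bicommutantOf {α : Type*} (g : α → B) : Set (H →L[ℂ] H) :=
  centralizer (centralizer (range fun a => G.lam (g a)))

namespace SubalgebraGNS

variable {G} {f : A →⋆ₐ[ℂ] B} (S : G.SubalgebraGNS f)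

def vec (a : A) : S.K := ⟨G.vec (f a), S.vec_mem a⟩

def vacuum : S.K := S.vec 1

/-- `λ_A(A)''`. -/
abbrev bicommutant : Set (S.K →L[ℂ] S.K) := centralizer (centralizer (range S.lam))

theorem coe_vec (a : A) : (S.vec a : H) = G.vec (f a) := rfl

theorem coe_vacuum : (S.vacuum : H) = G.vec 1 := by
  rw [vacuum, coe_vec, map_one]

theorem isClosed_K : IsClosed (S.K : Set H) :=
  S.coe_eq_closure ▸ isClosed_closure

theorem denseRange_vec : DenseRange S.vec :=
  Subtype.dense_iff.2 fun v hv => by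
    rw [← range_comp]
    exact S.coe_eq_closure ▸ hv

theorem coe_lam (a : A) (ξ : S.K) : (S.lam a ξ : H) = G.lam (f a) ξ :=
  S.denseRange_vec.induction_on ξ (isClosed_eq (by fun_prop) (by fun_prop)) fun a' => by
    rw [vec, S.lam_vec, G.lam_vec, map_mul]

end SubalgebraGNS

variable [CompleteSpace H]

theorem extendOfNorm_mulRight_vec (b b' : B) :
    (G.vec ∘ₗ LinearMap.mulRight ℂ b).extendOfNorm G.vec (G.vec b') = G.vec (b' * b) :=
  LinearMap.extendOfNorm_eq G.denseRange_vec ⟨_, G.norm_vec_mul_le b⟩ b'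

noncomputable def rightMul : B →ₗ[ℂ] H →L[ℂ] H where
  toFun b := (G.vec ∘ₗ LinearMap.mulRight ℂ b).extendOfNorm G.vec
  map_add' b₁ b₂ := ext_of_denseRange G.denseRange_vec fun b' => by
    simp only [add_apply, extendOfNorm_mulRight_vec, mul_add, map_add]
  map_smul' s b := ext_of_denseRange G.denseRange_vec fun b' => by
    simp only [smul_apply, extendOfNorm_mulRight_vec, mul_smul_comm, map_smul, RingHom.id_apply]

theorem rightMul_vec (b b' : B) : G.rightMul b (G.vec b') = G.vec (b' * b) :=
  G.extendOfNorm_mulRight_vec b b'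

theorem rightMul_vec_one (b : B) : G.rightMul b (G.vec 1) = G.vec b := by
  rw [rightMul_vec, one_mul]

theorem rightMul_one : G.rightMul 1 = 1 :=
  ext_of_denseRange G.denseRange_vec fun b => by rw [rightMul_vec, mul_one, one_apply_eq_self]

theorem rightMul_mul (b b' : B) : G.rightMul (b * b') = G.rightMul b' * G.rightMul b :=
  ext_of_denseRange G.denseRange_vec fun c => by
    rw [mul_apply_eq_comp, rightMul_vec, rightMul_vec, rightMul_vec, mul_assoc]

theorem commute_rightMul_lam (b c : B) : Commute (G.rightMul b) (G.lam c) :=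
  ext_of_denseRange G.denseRange_vec fun b' => by
    simp only [mul_apply_eq_comp, rightMul_vec, lam_vec, mul_assoc]

theorem adjoint_lam (c : B) : adjoint (G.lam c) = G.lam (star c) :=
  (ext_inner_of_denseRange G.denseRange_vec fun b b' => by
    rw [adjoint_inner_right, lam_vec, lam_vec, inner_vec_vec, inner_vec_vec, star_mul,
      mul_assoc]).symm

theorem adjoint_rightMul (b : B) : adjoint (G.rightMul b) = G.rightMul (star b) :=
  (ext_inner_of_denseRange G.denseRange_vec fun b₁ b₂ => by
    rw [adjoint_inner_right, rightMul_vec, rightMul_vec, inner_vec_vec, inner_vec_vec,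
      star_mul, mul_assoc, G.trace_mul_comm (star b), mul_assoc]).symm

theorem eq_of_commute_rightMul {y y' : H →L[ℂ] H} (hy : ∀ b, Commute y (G.rightMul b))
    (hy' : ∀ b, Commute y' (G.rightMul b)) (h : y (G.vec 1) = y' (G.vec 1)) : y = y' :=
  ext_of_denseRange G.denseRange_vec fun b => by
    rw [← rightMul_vec_one, ← mul_apply_eq_comp, (hy b).eq, mul_apply_eq_comp, h,
      ← mul_apply_eq_comp, ← (hy' b).eq, mul_apply_eq_comp]

theorem rightMul_mem_centralizer {α : Type*} (g : α → B) (b : B) :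
    G.rightMul b ∈ centralizer (range fun a => G.lam (g a)) := by
  rintro _ ⟨a, rfl⟩
  exact (G.commute_rightMul_lam b (g a)).eq.symm

theorem commute_rightMul_of_mem {α : Type*} {g : α → B} {y : H →L[ℂ] H}
    (hy : y ∈ G.bicommutantOf g) (b : B) : Commute y (G.rightMul b) :=
  (hy _ (G.rightMul_mem_centralizer g b)).symm

namespace SubalgebraGNS

variable {G} {f : A →⋆ₐ[ℂ] B} (S : G.SubalgebraGNS f)

instance : CompleteSpace S.K :=
  S.isClosed_K.completeSpace_coe

theorem rightMul_mem (a : A) (ξ : S.K) : G.rightMul (f a) ξ ∈ S.K :=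
  S.denseRange_vec.induction_on (p := fun ξ : S.K => G.rightMul (f a) ξ ∈ S.K) ξ
    (S.isClosed_K.preimage (by fun_prop)) fun a' => by
    rw [coe_vec, rightMul_vec, ← map_mul]
    exact S.vec_mem _

theorem adjoint_subtypeL_apply_subtypeL (ξ : S.K) :
    adjoint S.K.subtypeL (S.K.subtypeL ξ) = ξ := by
  rw [Submodule.adjoint_subtypeL]
  exact Submodule.orthogonalProjectionOnto_mem_subspace_eq_self ξ

theorem adjoint_lam (a : A) : adjoint (S.lam a) = S.lam (star a) :=
  ((eq_adjoint_iff _ _).2 fun ξ η => by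
    rw [Submodule.coe_inner, Submodule.coe_inner, coe_lam, coe_lam, map_star,
      ← G.adjoint_lam, adjoint_inner_left]).symm

theorem adjoint_subtypeL_lam (a : A) (v : H) :
    adjoint S.K.subtypeL (G.lam (f a) v) = S.lam a (adjoint S.K.subtypeL v) := by
  refine ext_inner_left ℂ fun ξ => ?_
  rw [adjoint_inner_right, ← adjoint_inner_left, G.adjoint_lam, ← map_star]
  change ⟪G.lam (f (star a)) (ξ : H), v⟫_ℂ = _
  rw [← coe_lam]
  change ⟪S.K.subtypeL (S.lam (star a) ξ), v⟫_ℂ = _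
  rw [← adjoint_inner_right, ← S.adjoint_lam, adjoint_inner_left]

theorem compress_mem_centralizer {z : H →L[ℂ] H}
    (hz : z ∈ centralizer (range fun a => G.lam (f a))) :
    adjoint S.K.subtypeL ∘L z ∘L S.K.subtypeL ∈ centralizer (range S.lam) :=
  comp_comp_mem_centralizer_of_intertwine S.coe_lam S.adjoint_subtypeL_lam hz

theorem dilate_mem_centralizer {w : S.K →L[ℂ] S.K} (hw : w ∈ centralizer (range S.lam)) :
    S.K.subtypeL ∘L w ∘L adjoint S.K.subtypeL ∈ centralizer (range fun a => G.lam (f a)) :=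
  comp_comp_mem_centralizer_of_intertwine S.adjoint_subtypeL_lam S.coe_lam hw

theorem star_mem_bicommutant {x : S.K →L[ℂ] S.K} (hx : x ∈ S.bicommutant) :
    star x ∈ S.bicommutant := by
  have hlam : ∀ m ∈ range S.lam, star m ∈ range S.lam := by
    rintro _ ⟨a, rfl⟩
    exact ⟨star a, by rw [star_eq_adjoint, adjoint_lam]⟩
  exact star_mem_centralizer' (fun _ => star_mem_centralizer' hlam) hx

noncomputable def rightMul (a : A) : S.K →L[ℂ] S.K :=
  (G.rightMul (f a)).restrict fun ξ hξ => S.rightMul_mem a ⟨ξ, hξ⟩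

theorem coe_rightMul (a : A) (ξ : S.K) : (S.rightMul a ξ : H) = G.rightMul (f a) ξ := rfl

theorem rightMul_mem_centralizer (a : A) : S.rightMul a ∈ centralizer (range S.lam) := by
  rintro _ ⟨a', rfl⟩
  ext ξ
  simp only [mul_apply_eq_comp, coe_rightMul, coe_lam]
  exact DFunLike.congr_fun (G.commute_rightMul_lam (f a) (f a')).eq.symm _

theorem rightMul_vacuum (a : A) : S.rightMul a S.vacuum = S.vec a :=
  Subtype.ext (by rw [coe_rightMul, coe_vacuum, rightMul_vec_one, coe_vec])

theorem apply_vec_of_mem {x : S.K →L[ℂ] S.K} (hx : x ∈ S.bicommutant) (a : A) :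
    x (S.vec a) = S.rightMul a (x S.vacuum) := by
  rw [← rightMul_vacuum, ← mul_apply_eq_comp, ← mul_apply_eq_comp,
    hx _ (S.rightMul_mem_centralizer a)]

/-- `Ω` is separating for `λ_A(A)''`. -/
theorem eq_of_apply_vacuum_eq {x y : S.K →L[ℂ] S.K} (hx : x ∈ S.bicommutant)
    (hy : y ∈ S.bicommutant) (h : x S.vacuum = y S.vacuum) : x = y :=
  ext_of_denseRange S.denseRange_vec fun a => by
    rw [S.apply_vec_of_mem hx, S.apply_vec_of_mem hy, h]

theorem norm_rightMul_apply_le {x : S.K →L[ℂ] S.K} (hx : x ∈ S.bicommutant) (b : B) :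
    ‖G.rightMul b (x S.vacuum)‖ ≤ ‖x‖ * ‖G.vec b‖ := by
  set d := G.rightMul b ∘L S.K.subtypeL
  have hρ : adjoint (G.rightMul b) * G.rightMul b ∈ centralizer (range fun a => G.lam (f a)) := by
    rw [adjoint_rightMul]
    exact mul_mem_centralizer (G.rightMul_mem_centralizer f _) (G.rightMul_mem_centralizer f _)
  have hc : adjoint d ∘L d ∈ centralizer (range S.lam) := by
    have hd : adjoint d ∘L d =
        adjoint S.K.subtypeL ∘L (adjoint (G.rightMul b) * G.rightMul b) ∘L S.K.subtypeL := by
      rw [adjoint_comp]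
      rfl
    exact hd ▸ S.compress_mem_centralizer hρ
  have := norm_apply_apply_le_of_commute d (hx _ hc) S.vacuum
  rwa [comp_apply, comp_apply, Submodule.subtypeL_apply, Submodule.subtypeL_apply, coe_vacuum,
    rightMul_vec_one] at this

/-- The extension of `bΩ ↦ ρ(b) xΩ` to `H`; junk unless `x ∈ λ_A(A)''`. -/
noncomputable def inducedOp (x : S.K →L[ℂ] S.K) : H →L[ℂ] H :=
  ((apply ℂ H (x S.vacuum : H)).toLinearMap ∘ₗ G.rightMul).extendOfNorm G.vec

variable {S} {x : S.K →L[ℂ] S.K}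

theorem inducedOp_vec (hx : x ∈ S.bicommutant) (b : B) :
    S.inducedOp x (G.vec b) = G.rightMul b (x S.vacuum) :=
  LinearMap.extendOfNorm_eq G.denseRange_vec ⟨_, S.norm_rightMul_apply_le hx⟩ b

theorem inducedOp_vec_one (hx : x ∈ S.bicommutant) :
    S.inducedOp x (G.vec 1) = x S.vacuum := by
  rw [inducedOp_vec hx, rightMul_one, one_apply_eq_self]

theorem norm_inducedOp_le (hx : x ∈ S.bicommutant) : ‖S.inducedOp x‖ ≤ ‖x‖ :=
  LinearMap.opNorm_extendOfNorm_le G.denseRange_vec (norm_nonneg x) (S.norm_rightMul_apply_le hx)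

theorem commute_inducedOp_rightMul (hx : x ∈ S.bicommutant) (b : B) :
    Commute (S.inducedOp x) (G.rightMul b) :=
  ext_of_denseRange G.denseRange_vec fun b' => by
    rw [mul_apply_eq_comp, mul_apply_eq_comp, rightMul_vec, inducedOp_vec hx, inducedOp_vec hx,
      rightMul_mul, mul_apply_eq_comp]

theorem eq_inducedOp (hx : x ∈ S.bicommutant) {y : H →L[ℂ] H}
    (hy : ∀ b, Commute y (G.rightMul b)) (h : y (G.vec 1) = x S.vacuum) : y = S.inducedOp x :=
  G.eq_of_commute_rightMul hy (commute_inducedOp_rightMul hx)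
    (h.trans (inducedOp_vec_one hx).symm)

theorem inducedOp_coe (hx : x ∈ S.bicommutant) (ξ : S.K) : S.inducedOp x ξ = x ξ := by
  have : S.inducedOp x ∘L S.K.subtypeL = S.K.subtypeL ∘L x :=
    ext_of_denseRange S.denseRange_vec fun a => by
      rw [comp_apply, comp_apply, Submodule.subtypeL_apply, Submodule.subtypeL_apply, coe_vec,
        inducedOp_vec hx, S.apply_vec_of_mem hx, coe_rightMul]
  exact DFunLike.congr_fun this ξ

/-- The compression `T` of `ρ(b')⋆ z ρ(b)` to `H_A` lies in `λ_A(A)'`, so it can be moved past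
`x`: both sides equal `⟪Ω, T x Ω⟫ = ⟪x⋆Ω, T Ω⟫`. -/
theorem inner_vec_apply_inducedOp (hx : x ∈ S.bicommutant) {z : H →L[ℂ] H}
    (hz : z ∈ centralizer (range fun a => G.lam (f a))) (b b' : B) :
    ⟪G.vec b', z (S.inducedOp x (G.vec b))⟫_ℂ =
      ⟪S.inducedOp (star x) (G.vec b'), z (G.vec b)⟫_ℂ := by
  set T := adjoint S.K.subtypeL ∘L (adjoint (G.rightMul b') * z * G.rightMul b) ∘L S.K.subtypeL
  have hT : T ∈ centralizer (range S.lam) := by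
    refine S.compress_mem_centralizer (mul_mem_centralizer (mul_mem_centralizer ?_ hz) ?_)
    · rw [adjoint_rightMul]
      exact G.rightMul_mem_centralizer f _
    · exact G.rightMul_mem_centralizer f _
  have hTx : T (x S.vacuum) = x (T S.vacuum) := DFunLike.congr_fun (hx T hT) S.vacuum
  calc ⟪G.vec b', z (S.inducedOp x (G.vec b))⟫_ℂ
      = ⟪S.vacuum, T (x S.vacuum)⟫_ℂ := by
        rw [inducedOp_vec hx, ← rightMul_vec_one, ← adjoint_inner_right, ← S.coe_vacuum]
        exact (adjoint_inner_right S.K.subtypeL S.vacuum _).symm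
    _ = ⟪star x S.vacuum, T S.vacuum⟫_ℂ := by
        rw [hTx, star_eq_adjoint, adjoint_inner_left]
    _ = ⟪S.inducedOp (star x) (G.vec b'), z (G.vec b)⟫_ℂ := by
        rw [inducedOp_vec (S.star_mem_bicommutant hx), ← G.rightMul_vec_one b, ← S.coe_vacuum,
          ← adjoint_inner_right (G.rightMul b')]
        exact adjoint_inner_right S.K.subtypeL (star x S.vacuum) _

theorem star_inducedOp (hx : x ∈ S.bicommutant) :
    star (S.inducedOp x) = S.inducedOp (star x) :=
  ext_inner_of_denseRange G.denseRange_vec fun b' b => by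
    have := inner_vec_apply_inducedOp (S.star_mem_bicommutant hx) one_mem_centralizer b b'
    rw [star_star x, one_apply_eq_self, one_apply_eq_self] at this
    rw [star_eq_adjoint, adjoint_inner_right, this]

theorem inducedOp_mem_bicommutant (hx : x ∈ S.bicommutant) :
    S.inducedOp x ∈ G.bicommutantOf f := fun z hz =>
  ext_inner_of_denseRange G.denseRange_vec fun b' b => by
    rw [mul_apply_eq_comp, mul_apply_eq_comp, inner_vec_apply_inducedOp hx hz,
      ← star_inducedOp hx, star_eq_adjoint, adjoint_inner_left]

variable (S) in
theorem injOn_inducedOp : InjOn S.inducedOp S.bicommutant :=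
  fun x hx y hy h => S.eq_of_apply_vacuum_eq hx hy <| Subtype.ext <| by
    rw [← inducedOp_vec_one hx, ← inducedOp_vec_one hy, h]

variable (S) in
theorem inducedOp_lam (a : A) : S.inducedOp (S.lam a) = G.lam (f a) :=
  (eq_inducedOp (subset_centralizer_centralizer ⟨a, rfl⟩)
    (fun b => (G.commute_rightMul_lam b (f a)).symm)
    (by rw [G.lam_vec, mul_one, vacuum, S.coe_lam, coe_vec, G.lam_vec, map_one, mul_one])).symm

theorem exists_inducedOp_eq {y : H →L[ℂ] H} (hy : y ∈ G.bicommutantOf f) :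
    ∃ x ∈ S.bicommutant, S.inducedOp x = y := by
  have hyD : ∀ w ∈ centralizer (range S.lam), ∀ v,
      S.K.subtypeL (w (adjoint S.K.subtypeL (y v))) =
        y (S.K.subtypeL (w (adjoint S.K.subtypeL v))) :=
    fun w hw v => DFunLike.congr_fun (hy _ (S.dilate_mem_centralizer hw)) v
  have hx : adjoint S.K.subtypeL ∘L y ∘L S.K.subtypeL ∈ S.bicommutant :=
    fun w hw => ext fun ξ => by
      have h := congrArg (adjoint S.K.subtypeL) (hyD w hw (S.K.subtypeL ξ))
      rwa [S.adjoint_subtypeL_apply_subtypeL, S.adjoint_subtypeL_apply_subtypeL] at h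
  refine ⟨_, hx, (eq_inducedOp hx (G.commute_rightMul_of_mem hy) ?_).symm⟩
  have h := hyD 1 one_mem_centralizer (S.K.subtypeL S.vacuum)
  rw [one_apply_eq_self, one_apply_eq_self, S.adjoint_subtypeL_apply_subtypeL] at h
  rw [← S.coe_vacuum]
  exact h.symm

variable (S) in
theorem image_inducedOp : S.inducedOp '' S.bicommutant = G.bicommutantOf f := by
  refine Subset.antisymm ?_ fun y hy => ?_
  · rintro _ ⟨x, hx, rfl⟩
    exact inducedOp_mem_bicommutant hx
  · obtain ⟨x, hx, rfl⟩ := S.exists_inducedOp_eq hy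
    exact mem_image_of_mem _ hx

variable (S) in
theorem inducedOp_one : S.inducedOp 1 = 1 := by
  have h1 : (1 : S.K →L[ℂ] S.K) ∈ S.bicommutant := one_mem_centralizer
  refine (eq_inducedOp h1 (fun _ => Commute.one_left _) ?_).symm
  rw [one_apply_eq_self, one_apply_eq_self, coe_vacuum]

theorem inducedOp_mul {y : S.K →L[ℂ] S.K} (hx : x ∈ S.bicommutant) (hy : y ∈ S.bicommutant) :
    S.inducedOp (x * y) = S.inducedOp x * S.inducedOp y :=
  (eq_inducedOp (mul_mem_centralizer hx hy)
    (fun b => (commute_inducedOp_rightMul hx b).mul_left (commute_inducedOp_rightMul hy b))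
    (by rw [mul_apply_eq_comp, inducedOp_vec_one hy, inducedOp_coe hx, mul_apply_eq_comp])).symm

theorem inducedOp_add {y : S.K →L[ℂ] S.K} (hx : x ∈ S.bicommutant) (hy : y ∈ S.bicommutant) :
    S.inducedOp (x + y) = S.inducedOp x + S.inducedOp y :=
  (eq_inducedOp (add_mem_centralizer hx hy)
    (fun b => (commute_inducedOp_rightMul hx b).add_left (commute_inducedOp_rightMul hy b))
    (by rw [add_apply, inducedOp_vec_one hx, inducedOp_vec_one hy, add_apply,
      Submodule.coe_add])).symm

theorem inducedOp_smul (hx : x ∈ S.bicommutant) (c : ℂ) :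
    S.inducedOp (c • x) = c • S.inducedOp x :=
  (eq_inducedOp (fun z hz => (Algebra.mul_smul_comm c z x).trans <|
      (congrArg (c • ·) (hx z hz)).trans (Algebra.smul_mul_assoc c x z).symm)
    (fun b => (commute_inducedOp_rightMul hx b).smul_left c)
    (by rw [smul_apply, inducedOp_vec_one hx, smul_apply, Submodule.coe_smul])).symm

theorem tendsto_inner_inducedOp {α : Type*} {l : Filter α} {x : α → S.K →L[ℂ] S.K}
    {x₀ : S.K →L[ℂ] S.K} (hx : ∀ i, x i ∈ S.bicommutant) (hx₀ : x₀ ∈ S.bicommutant)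
    (hC : ∃ C, ∀ i, ‖x i‖ ≤ C)
    (h : ∀ ξ η : S.K, Tendsto (fun i => ⟪ξ, x i η⟫_ℂ) l (𝓝 ⟪ξ, x₀ η⟫_ℂ)) (ξ η : H) :
    Tendsto (fun i => ⟪ξ, S.inducedOp (x i) η⟫_ℂ) l
      (𝓝 ⟪ξ, S.inducedOp x₀ η⟫_ℂ) := by
  obtain ⟨C, hC⟩ := hC
  have hbound : ∀ i, ‖innerSL ℂ ξ ∘L S.inducedOp (x i)‖ ≤ ‖ξ‖ * C := fun i =>
    (opNorm_comp_le _ _).trans <| by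
      rw [innerSL_apply_norm]
      exact mul_le_mul_of_nonneg_left ((norm_inducedOp_le (hx i)).trans (hC i)) (norm_nonneg ξ)
  have hinner : ∀ {y} (hy : y ∈ S.bicommutant) (b : B),
      ⟪ξ, S.inducedOp y (G.vec b)⟫_ℂ =
        ⟪adjoint S.K.subtypeL (adjoint (G.rightMul b) ξ), y S.vacuum⟫_ℂ := fun hy b => by
    rw [inducedOp_vec hy, ← adjoint_inner_left, adjoint_inner_left S.K.subtypeL]
    rfl
  refine tendsto_apply_of_denseRange (T := fun i => innerSL ℂ ξ ∘L S.inducedOp (x i))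
    (T₀ := innerSL ℂ ξ ∘L S.inducedOp x₀) ⟨_, hbound⟩ G.denseRange_vec (fun b => ?_) η
  simp only [comp_apply, innerSL_apply_apply, hinner (hx _), hinner hx₀]
  exact h _ _

end SubalgebraGNS

end TracialGNS

theorem stmt9_general (A B : Type*) [Ring A] [Algebra ℂ A] [StarRing A]
    [Ring B] [Algebra ℂ B] [StarRing B]
    (f : A →⋆ₐ[ℂ] B)
    (tB : B →ₗ[ℂ] ℂ)
    (htBtr : ∀ b b' : B, tB (b * b') = tB (b' * b))
    (H : Type*) [NormedAddCommGroup H] [InnerProductSpace ℂ H] [CompleteSpace H]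
    (ιB : B →ₗ[ℂ] H) (hdense : DenseRange ιB)
    (hip : ∀ b b' : B, (inner ℂ (ιB b') (ιB b) : ℂ) = tB (star b' * b))
    (lamB : B → H →L[ℂ] H) (hlamB : ∀ b b' : B, lamB b (ιB b') = ιB (b * b'))
    (K : Submodule ℂ H) [CompleteSpace K]
    (hmem : ∀ a : A, ιB (f a) ∈ K)
    (hKdef : (K : Set H) = closure (Set.range fun a : A => ιB (f a)))
    (lamA : A → K →L[ℂ] K)
    (hlamA : ∀ a a' : A,
      lamA a ⟨ιB (f a'), hmem a'⟩ = (⟨ιB (f (a * a')), hmem (a * a')⟩ : K)) :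
    let MA : Set (K →L[ℂ] K) := Set.centralizer (Set.centralizer (Set.range lamA))
    let MBA : Set (H →L[ℂ] H) :=
      Set.centralizer (Set.centralizer (Set.range fun a : A => lamB (f a)))
    let Good : ((K →L[ℂ] K) → (H →L[ℂ] H)) → Prop := fun I =>
      -- unital *-homomorphism on MA:
      (I 1 = 1) ∧
      (∀ x ∈ MA, ∀ y ∈ MA, I (x * y) = I x * I y ∧ I (x + y) = I x + I y) ∧
      (∀ x ∈ MA, ∀ c : ℂ, I (c • x) = c • I x) ∧
      (∀ x ∈ MA, I (star x) = star (I x)) ∧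
      -- injective, extends the inclusion, with image λ_B(A)'':
      Set.InjOn I MA ∧
      (∀ a : A, I (lamA a) = lamB (f a)) ∧
      (I '' MA = MBA) ∧
      -- normal (weak-operator continuous on norm-bounded nets):
      (∀ (It : Type) (l : Filter It) (x : It → K →L[ℂ] K) (x₀ : K →L[ℂ] K),
        (∀ i, x i ∈ MA) → x₀ ∈ MA →
        (∃ C : ℝ, ∀ i, ‖x i‖ ≤ C) →
        (∀ ξ η : K, Filter.Tendsto (fun i => (inner ℂ ξ (x i η) : ℂ)) l
            (nhds (inner ℂ ξ (x₀ η)))) →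
        ∀ ξ η : H, Filter.Tendsto (fun i => (inner ℂ ξ (I (x i) η) : ℂ)) l
            (nhds (inner ℂ ξ (I x₀ η)))) ∧
      -- ι(x) Ω = x Ω:
      (∀ x ∈ MA, I x (ιB 1) = ((x ⟨ιB (f 1), hmem 1⟩ : K) : H))
    (∃ I, Good I) ∧ ∀ I₁ I₂, Good I₁ → Good I₂ → ∀ x ∈ MA, I₁ x = I₂ x := by
  intro MA MBA Good
  let G : TracialGNS B H := ⟨ιB, tB, lamB, hdense, hip, htBtr, hlamB⟩
  let S : G.SubalgebraGNS f :=
    ⟨K, lamA, hmem, hKdef, fun a a' => congrArg Subtype.val (hlamA a a')⟩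
  have hGood : Good S.inducedOp :=
    ⟨S.inducedOp_one, fun _ hx _ hy => ⟨S.inducedOp_mul hx hy, S.inducedOp_add hx hy⟩,
      fun _ hx => S.inducedOp_smul hx, fun _ hx => (S.star_inducedOp hx).symm,
      S.injOn_inducedOp, S.inducedOp_lam, S.image_inducedOp,
      fun _ _ _ _ hx hx₀ hC h => S.tendsto_inner_inducedOp hx hx₀ hC h,
      fun _ hx => S.inducedOp_vec_one hx⟩
  have huniq : ∀ I, Good I → ∀ x ∈ MA, I x = S.inducedOp x :=
    fun I ⟨_, _, _, _, _, _, himage, _, hvac⟩ x hx => by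
      have hIx : I x ∈ MBA := himage ▸ mem_image_of_mem I hx
      exact S.eq_inducedOp hx (G.commute_rightMul_of_mem hIx) (hvac x hx)
  exact ⟨⟨_, hGood⟩, fun I₁ I₂ h₁ h₂ x hx =>
    (huniq I₁ h₁ x hx).trans (huniq I₂ h₂ x hx).symm⟩

/-- Let `A ⊆ B` (via an injective unital *-homomorphism `f`) be a compatible pair of
finite pre-von Neumann algebras: the trace `tB` of `B` restricts to the trace `tA` of
`A`.  Realize `B` by its GNS embedding `ιB : B → H` (dense range,
`⟪ιB b', ιB b⟫ = tB(b'* b)`), let `K ⊆ H` be the closed subspace which is the closure of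
`ιB(f(A))` (the completion `H_A` of `A`), let `lamB : B → B(H)` and `lamA : A → B(K)`
be the left regular representations, and let `Ω = ιB 1` be the common vacuum vector.
Then the inclusion `A ⊆ B` extends uniquely to a normal unital injective
*-homomorphism `ι : λ_A(A)'' → λ_B(B)''` whose image is `λ_B(A)''` and which satisfies
`ι(x) Ω = x Ω` for all `x ∈ λ_A(A)''`. -/
theorem stmt9 (A B : Type*) [Ring A] [Algebra ℂ A] [StarRing A]
    [Ring B] [Algebra ℂ B] [StarRing B]
    (f : A →⋆ₐ[ℂ] B) (hf : Function.Injective f)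
    (tA : A →ₗ[ℂ] ℂ) (tB : B →ₗ[ℂ] ℂ)
    (htA1 : tA 1 = 1) (htAtr : ∀ a a' : A, tA (a * a') = tA (a' * a))
    (htB1 : tB 1 = 1) (htBtr : ∀ b b' : B, tB (b * b') = tB (b' * b))
    (hcompat : ∀ a : A, tB (f a) = tA a)
    (H : Type*) [NormedAddCommGroup H] [InnerProductSpace ℂ H] [CompleteSpace H]
    (ιB : B →ₗ[ℂ] H) (hdense : DenseRange ιB) (hinj : Function.Injective ιB)
    (hip : ∀ b b' : B, (inner ℂ (ιB b') (ιB b) : ℂ) = tB (star b' * b))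
    (lamB : B → H →L[ℂ] H) (hlamB : ∀ b b' : B, lamB b (ιB b') = ιB (b * b'))
    (K : Submodule ℂ H) [CompleteSpace K]
    (hmem : ∀ a : A, ιB (f a) ∈ K)
    (hKdef : (K : Set H) = closure (Set.range fun a : A => ιB (f a)))
    (lamA : A → K →L[ℂ] K)
    (hlamA : ∀ a a' : A,
      lamA a ⟨ιB (f a'), hmem a'⟩ = (⟨ιB (f (a * a')), hmem (a * a')⟩ : K)) :
    let MA : Set (K →L[ℂ] K) := Set.centralizer (Set.centralizer (Set.range lamA))
    let MBA : Set (H →L[ℂ] H) :=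
      Set.centralizer (Set.centralizer (Set.range fun a : A => lamB (f a)))
    let Good : ((K →L[ℂ] K) → (H →L[ℂ] H)) → Prop := fun I =>
      -- unital *-homomorphism on MA:
      (I 1 = 1) ∧
      (∀ x ∈ MA, ∀ y ∈ MA, I (x * y) = I x * I y ∧ I (x + y) = I x + I y) ∧
      (∀ x ∈ MA, ∀ c : ℂ, I (c • x) = c • I x) ∧
      (∀ x ∈ MA, I (star x) = star (I x)) ∧
      -- injective, extends the inclusion, with image λ_B(A)'':
      Set.InjOn I MA ∧
      (∀ a : A, I (lamA a) = lamB (f a)) ∧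
      (I '' MA = MBA) ∧
      -- normal (weak-operator continuous on norm-bounded nets):
      (∀ (It : Type) (l : Filter It) (x : It → K →L[ℂ] K) (x₀ : K →L[ℂ] K),
        (∀ i, x i ∈ MA) → x₀ ∈ MA →
        (∃ C : ℝ, ∀ i, ‖x i‖ ≤ C) →
        (∀ ξ η : K, Filter.Tendsto (fun i => (inner ℂ ξ (x i η) : ℂ)) l
            (nhds (inner ℂ ξ (x₀ η)))) →
        ∀ ξ η : H, Filter.Tendsto (fun i => (inner ℂ ξ (I (x i) η) : ℂ)) l
            (nhds (inner ℂ ξ (I x₀ η)))) ∧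
      -- ι(x) Ω = x Ω:
      (∀ x ∈ MA, I x (ιB 1) = ((x ⟨ιB (f 1), hmem 1⟩ : K) : H))
    (∃ I, Good I) ∧ ∀ I₁ I₂, Good I₁ → Good I₂ → ∀ x ∈ MA, I₁ x = I₂ x :=
  stmt9_general A B f tB htBtr H ιB hdense hip lamB hlamB K hmem hKdef lamA hlamA
end

section
/- Let H be a Hilbert space that is the orthogonal direct sum ⊕_{n≥k} P_n of finite-dimensional subspaces, and let a be a bounded operator such that a maps each P_n into the span of P_t for |n-m|+k ≤ t ≤ n+m-k, with ||(a b)_t|| ≤ K ||b|| for each component whenever b ∈ P_n. Then for all b ∈ ⊕_{n≥k} P_n (algebraic direct sum), ||a b|| ≤ K(1 + 2(m-k)) ||b||. -/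
/-!
Write `b = ∑ₙ bₙ` with `bₙ ∈ P n` and split each `a bₙ` along the diagonals `d = t - n` of the
band, `k - m ≤ d ≤ m - k`. On a fixed diagonal the pieces `(a bₙ)_{n+d}` lie in distinct, hence
mutually orthogonal, subspaces and have norms at most `K ‖bₙ‖`, so by Pythagoras their sum has
norm at most `K ‖b‖`. The triangle inequality over the `1 + 2(m - k)` diagonals gives the bound.
-/

open Finset

section Pythagoras

variable {𝕜 E ι : Type*} [RCLike 𝕜] [NormedAddCommGroup E] [InnerProductSpace 𝕜 E]

theorem norm_sum_sq_eq_sum_norm_sq_of_pairwise_inner_eq_zero {s : Finset ι} {v : ι → E}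
    (h : (s : Set ι).Pairwise fun i j => inner 𝕜 (v i) (v j) = 0) :
    ‖∑ i ∈ s, v i‖ ^ 2 = ∑ i ∈ s, ‖v i‖ ^ 2 := by
  have hdiag : inner 𝕜 (∑ i ∈ s, v i) (∑ j ∈ s, v j) = ∑ i ∈ s, inner 𝕜 (v i) (v i) := by
    simp_rw [sum_inner, inner_sum]
    exact sum_congr rfl fun i hi => sum_eq_single_of_mem i hi fun j hj hji => h hi hj hji.symm
  simp_rw [@norm_sq_eq_re_inner 𝕜, hdiag, map_sum]

theorem norm_sum_le_mul_norm_sum_of_pairwise_inner_eq_zero {s : Finset ι} {v w : ι → E} {K : ℝ}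
    (hK : 0 ≤ K)
    (hv : (s : Set ι).Pairwise fun i j => inner 𝕜 (v i) (v j) = 0)
    (hw : (s : Set ι).Pairwise fun i j => inner 𝕜 (w i) (w j) = 0)
    (hvw : ∀ i ∈ s, ‖v i‖ ≤ K * ‖w i‖) :
    ‖∑ i ∈ s, v i‖ ≤ K * ‖∑ i ∈ s, w i‖ := by
  refine (pow_le_pow_iff_left₀ (norm_nonneg _) (by positivity) two_ne_zero).mp ?_
  calc ‖∑ i ∈ s, v i‖ ^ 2 = ∑ i ∈ s, ‖v i‖ ^ 2 :=
        norm_sum_sq_eq_sum_norm_sq_of_pairwise_inner_eq_zero hv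
    _ ≤ ∑ i ∈ s, (K * ‖w i‖) ^ 2 :=
      sum_le_sum fun i hi => pow_le_pow_left₀ (norm_nonneg _) (hvw i hi) 2
    _ = (K * ‖∑ i ∈ s, w i‖) ^ 2 := by
      rw [mul_pow, norm_sum_sq_eq_sum_norm_sq_of_pairwise_inner_eq_zero hw, mul_sum]
      simp_rw [mul_pow]

end Pythagoras

theorem Submodule.exists_finset_subset_of_mem_biSup {R M ι : Type*} [Semiring R]
    [AddCommMonoid M] [Module R M] {p : ι → Submodule R M} {S : Set ι} {x : M}
    (hx : x ∈ ⨆ i ∈ S, p i) :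
    ∃ s : Finset ι, ↑s ⊆ S ∧ x ∈ ⨆ i ∈ s, p i := by
  rw [iSup_subtype'] at hx
  obtain ⟨s, hs⟩ := Submodule.exists_finset_of_mem_iSup _ hx
  refine ⟨s.map (Function.Embedding.subtype (· ∈ S)), by simp, ?_⟩
  have hle : (⨆ i ∈ s, p (i : ι)) ≤ ⨆ i ∈ s.map (Function.Embedding.subtype (· ∈ S)), p i :=
    iSup₂_le fun i hi => le_biSup p (Finset.mem_map_of_mem _ hi)
  exact hle hs

theorem OrthogonalFamily.sum_starProjection_of_mem_biSup {𝕜 E ι : Type*} [RCLike 𝕜]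
    [NormedAddCommGroup E] [InnerProductSpace 𝕜 E] {V : ι → Submodule 𝕜 E}
    [∀ i, CompleteSpace (V i)] (hV : OrthogonalFamily 𝕜 (fun i => V i) fun i => (V i).subtypeₗᵢ)
    {s : Finset ι} {x : E} (hx : x ∈ ⨆ i ∈ s, V i) :
    ∑ i ∈ s, (V i).starProjection x = x := by
  rw [iSup_subtype'] at hx
  rw [← sum_coe_sort]
  exact (hV.comp Subtype.val_injective).sum_projection_of_mem_iSup x hx

section Diagonals

variable {𝕜 H : Type*} [RCLike 𝕜] [NormedAddCommGroup H] [InnerProductSpace 𝕜 H]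
  (P : ℕ → Submodule 𝕜 H) [∀ n, CompleteSpace (P n)]

/-- The component `x_{n+d}`, written as a sum over the at most one `t ∈ W` with `t = n + d`;
the window `W` only has to contain the indices where `x` has components. -/
noncomputable def diagonalPart (W : Finset ℕ) (n : ℕ) (d : ℤ) (x : H) : H :=
  ∑ t ∈ W with ((t : ℕ) : ℤ) - n = d, (P t).starProjection x

variable {P}

theorem sum_diagonalPart (hP : OrthogonalFamily 𝕜 (fun n => P n) fun n => (P n).subtypeₗᵢ)
    {W : Finset ℕ} {J : Finset ℤ} {n : ℕ} (hWJ : ∀ t ∈ W, (t : ℤ) - n ∈ J) {x : H}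
    (hx : x ∈ ⨆ t ∈ W, P t) :
    ∑ d ∈ J, diagonalPart P W n d x = x := by
  unfold diagonalPart
  rw [sum_fiberwise_of_maps_to hWJ]
  exact hP.sum_starProjection_of_mem_biSup hx

theorem inner_diagonalPart_eq_zero
    (hP : OrthogonalFamily 𝕜 (fun n => P n) fun n => (P n).subtypeₗᵢ)
    {W W' : Finset ℕ} {n n' : ℕ} (hn : n ≠ n') (d : ℤ) (x y : H) :
    inner 𝕜 (diagonalPart P W n d x) (diagonalPart P W' n' d y) = 0 := by
  simp only [diagonalPart, sum_inner, inner_sum]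
  refine sum_eq_zero fun t ht => sum_eq_zero fun t' ht' =>
    (hP.isOrtho ?_).inner_eq (Submodule.coe_mem _) (Submodule.coe_mem _)
  simp only [mem_filter] at ht ht'
  omega

theorem norm_diagonalPart_le {W : Finset ℕ} {n : ℕ} {d : ℤ} {x : H} {C : ℝ} (hC : 0 ≤ C)
    (hx : ∀ t, ‖(P t).starProjection x‖ ≤ C) :
    ‖diagonalPart P W n d x‖ ≤ C := by
  have hsub : {t ∈ W | ((t : ℕ) : ℤ) - n = d} ⊆ {(n + d).toNat} := fun t ht => by
    simp only [mem_filter, mem_singleton] at ht ⊢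
    omega
  rcases subset_singleton_iff.mp hsub with h | h <;> simp [diagonalPart, h, hC, hx]

end Diagonals

theorem band_subset_Icc (n k m : ℕ) :
    {t : ℕ | |(n : ℤ) - m| + k ≤ t ∧ (t : ℤ) ≤ n + m - k} ⊆ ↑(Icc (n + k - m) (n + m - k)) := by
  intro t ht
  simp only [Set.mem_ofPred_eq, coe_Icc, Set.mem_Icc] at ht ⊢
  have := le_abs_self ((n : ℤ) - m)
  omega

theorem stmt14_general (H : Type*) [NormedAddCommGroup H] [InnerProductSpace ℂ H]
    (k m : ℕ) (hkm : k ≤ m)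
    (P : ℕ → Submodule ℂ H) [∀ n, FiniteDimensional ℂ (P n)]
    (horth : ∀ i j : ℕ, i ≠ j → ∀ v ∈ P i, ∀ w ∈ P j, (inner ℂ v w : ℂ) = 0)
    (K : ℝ) (hK : 0 < K) (a : H →L[ℂ] H)
    (hband : ∀ n : ℕ, k ≤ n → ∀ b ∈ P n,
      a b ∈ ⨆ t ∈ {t : ℕ | |(n : ℤ) - (m : ℤ)| + k ≤ t ∧ (t : ℤ) ≤ n + m - k}, P t)
    (hcomp : ∀ n : ℕ, k ≤ n → ∀ b ∈ P n, ∀ t : ℕ,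
      ‖((P t).orthogonalProjection (a b) : P t)‖ ≤ K * ‖b‖) :
    ∀ b ∈ ⨆ n ∈ {n : ℕ | k ≤ n}, P n,
      ‖a b‖ ≤ K * (1 + 2 * ((m : ℝ) - (k : ℝ))) * ‖b‖ := by
  intro b hb
  have hP : OrthogonalFamily ℂ (fun n => P n) fun n => (P n).subtypeₗᵢ :=
    fun i j hij v w => horth i j hij v v.2 w w.2
  obtain ⟨s, hsk, hbs⟩ := Submodule.exists_finset_subset_of_mem_biSup hb
  have hb_sum : ∑ n ∈ s, (P n).starProjection b = b := hP.sum_starProjection_of_mem_biSup hbs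
  set piece : ℤ → ℕ → H := fun d n =>
    diagonalPart P (Icc (n + k - m) (n + m - k)) n d (a ((P n).starProjection b))
  have hab : a b = ∑ d ∈ Icc ((k : ℤ) - m) (m - k), ∑ n ∈ s, piece d n := by
    conv_lhs => rw [← hb_sum, map_sum]
    rw [sum_comm]
    refine sum_congr rfl fun n hn => (sum_diagonalPart hP (fun t ht => ?_) ?_).symm
    · simp only [mem_Icc] at ht ⊢
      omega
    · exact SetLike.le_def.mp (biSup_mono fun t ht => band_subset_Icc n k m ht)
        (hband n (hsk hn) _ (Submodule.coe_mem _))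
  have hdiag : ∀ d, ‖∑ n ∈ s, piece d n‖ ≤ K * ‖b‖ := fun d => by
    conv_rhs => rw [← hb_sum]
    exact norm_sum_le_mul_norm_sum_of_pairwise_inner_eq_zero hK.le
      (fun n _ n' _ hn => inner_diagonalPart_eq_zero hP hn d _ _)
      (fun n _ n' _ hn => horth n n' hn _ (Submodule.coe_mem _) _ (Submodule.coe_mem _))
      fun n hn => norm_diagonalPart_le (by positivity)
        fun t => hcomp n (hsk hn) _ (Submodule.coe_mem _) t
  have hcard : (#(Icc ((k : ℤ) - m) (m - k)) : ℝ) = 1 + 2 * ((m : ℝ) - k) := by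
    rw [Int.card_Icc, show ((m : ℤ) - k + 1 - (k - m)).toNat = 2 * (m - k) + 1 by omega]
    push_cast [Nat.cast_sub hkm]
    ring
  calc ‖a b‖ ≤ ∑ d ∈ Icc ((k : ℤ) - m) (m - k), ‖∑ n ∈ s, piece d n‖ := hab ▸ norm_sum_le _ _
    _ ≤ ∑ d ∈ Icc ((k : ℤ) - m) (m - k), K * ‖b‖ := sum_le_sum fun d _ => hdiag d
    _ = K * (1 + 2 * ((m : ℝ) - k)) * ‖b‖ := by
      rw [sum_const, nsmul_eq_mul, hcard]
      ring

/-- Let `H` be a Hilbert space which is the orthogonal direct sum of finite-dimensional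
subspaces `P_n` (`n ≥ k`), and let `a` be a bounded operator mapping each `P_n` into the
(algebraic) span of the `P_t` with `|n-m|+k ≤ t ≤ n+m-k`, with component bounds
`‖(a b)_t‖ ≤ K ‖b‖` for `b ∈ P_n`.  Then for every `b` in the algebraic direct sum
`⊕_{n ≥ k} P_n`, one has `‖a b‖ ≤ K (1 + 2(m-k)) ‖b‖`. -/
theorem stmt14 (H : Type*) [NormedAddCommGroup H] [InnerProductSpace ℂ H] [CompleteSpace H]
    (k m : ℕ) (hkm : k ≤ m)
    (P : ℕ → Submodule ℂ H) [∀ n, FiniteDimensional ℂ (P n)]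
    (horth : ∀ i j : ℕ, i ≠ j → ∀ v ∈ P i, ∀ w ∈ P j, (inner ℂ v w : ℂ) = 0)
    (K : ℝ) (hK : 0 < K) (a : H →L[ℂ] H)
    (hband : ∀ n : ℕ, k ≤ n → ∀ b ∈ P n,
      a b ∈ ⨆ t ∈ {t : ℕ | |(n : ℤ) - (m : ℤ)| + k ≤ t ∧ (t : ℤ) ≤ n + m - k}, P t)
    (hcomp : ∀ n : ℕ, k ≤ n → ∀ b ∈ P n, ∀ t : ℕ,
      ‖((P t).orthogonalProjection (a b) : P t)‖ ≤ K * ‖b‖) :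
    ∀ b ∈ ⨆ n ∈ {n : ℕ | k ≤ n}, P n,
      ‖a b‖ ≤ K * (1 + 2 * ((m : ℝ) - (k : ℝ))) * ‖b‖ :=
  stmt14_general H k m hkm P horth K hK a hband hcomp
end

section
/- Let A be a finite pre-von Neumann algebra with completion H, vacuum vector Ω, representations λ, ρ, and modular conjugation J (the bounded conjugate-linear extension of aΩ ↦ a*Ω). Then for every x' in the commutant of λ(A)'' or of ρ(A)'', one has J x' Ω = x'* Ω. -/
/-! For `x'` commuting with `π(A)` (`π = λ` or `ρ`) and `b ∈ A`, `x' (bΩ) = π(b) (x'Ω)`, and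
`π(b)† Ω = b*Ω`, so
`⟪x'* Ω, bΩ⟫ = ⟪Ω, π(b) x'Ω⟫ = ⟪b*Ω, x'Ω⟫ = ⟪J x'Ω, J b*Ω⟫ = ⟪J x'Ω, bΩ⟫`,
the third step because `J` is antiunitary, which on `AΩ` is the trace property
`⟪a*Ω, b*Ω⟫ = t(a b*) = t(b* a) = ⟪bΩ, aΩ⟫`. Both sides then agree on the dense set `AΩ`. -/

open ContinuousLinearMap

section

variable {X H : Type*} [NormedAddCommGroup H] [InnerProductSpace ℂ H]

theorem inner_map_map_eq_of_denseRange {ι : X → H} (hdense : DenseRange ι) {J : H → H}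
    (hJcont : Continuous J) (hJ : ∀ a b, inner ℂ (J (ι a)) (J (ι b)) = inner ℂ (ι b) (ι a))
    (ξ η : H) : inner ℂ (J ξ) (J η) = inner ℂ η ξ := by
  refine hdense.induction_on₂ (p := fun ξ η => inner ℂ (J ξ) (J η) = inner ℂ η ξ) ?_ hJ ξ η
  exact isClosed_eq ((hJcont.comp continuous_fst).inner (hJcont.comp continuous_snd))
    (continuous_snd.inner continuous_fst)

variable [CompleteSpace H]

theorem adjoint_apply_eq_of_denseRange {ι : X → H} (hdense : DenseRange ι) (T : H →L[ℂ] H)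
    {Ω v : H} (h : ∀ a, inner ℂ Ω (T (ι a)) = inner ℂ v (ι a)) : adjoint T Ω = v :=
  hdense.eq_of_inner_left ℂ fun a => by rw [adjoint_inner_left, h]

theorem antiunitary_apply_eq_star_apply_of_commute [InvolutiveStar X] {ι : X → H}
    (hdense : DenseRange ι) {J : H → H}
    (hJinner : ∀ ξ η, inner ℂ (J ξ) (J η) = inner ℂ η ξ) (hJ : ∀ a, J (ι a) = ι (star a))
    (π : X → H →L[ℂ] H) {Ω : H} (hπΩ : ∀ a, π a Ω = ι a)
    (hπadj : ∀ a, adjoint (π a) Ω = ι (star a)) {x' : H →L[ℂ] H}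
    (hx' : ∀ a, Commute (π a) x') : J (x' Ω) = star x' Ω := by
  refine hdense.eq_of_inner_left ℂ fun b => ?_
  have hxb : x' (ι b) = π b (x' Ω) := by
    rw [← hπΩ b]; exact (DFunLike.congr_fun (hx' b).eq Ω).symm
  calc inner ℂ (J (x' Ω)) (ι b)
      = inner ℂ (J (x' Ω)) (J (ι (star b))) := by rw [hJ, star_star]
    _ = inner ℂ (ι (star b)) (x' Ω) := hJinner _ _
    _ = inner ℂ Ω (x' (ι b)) := by rw [← hπadj, adjoint_inner_left, hxb]
    _ = inner ℂ (star x' Ω) (ι b) := by rw [star_eq_adjoint, adjoint_inner_left]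

end

section

variable {A H : Type*} [Monoid A] [StarMul A] [NormedAddCommGroup H] [InnerProductSpace ℂ H]
  {t : A → ℂ} {ι : A → H}

theorem inner_star_star_of_trace (hip : ∀ a b, inner ℂ (ι b) (ι a) = t (star b * a))
    (htr : ∀ a b, t (a * b) = t (b * a)) (a b : A) :
    inner ℂ (ι (star a)) (ι (star b)) = inner ℂ (ι b) (ι a) := by
  rw [hip, hip, star_star, htr]

variable [CompleteSpace H]

theorem adjoint_leftMul_apply_one (hdense : DenseRange ι)
    (hip : ∀ a b, inner ℂ (ι b) (ι a) = t (star b * a)) {lam : A → H →L[ℂ] H}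
    (hlam : ∀ a b, lam a (ι b) = ι (a * b))
    (a : A) : adjoint (lam a) (ι 1) = ι (star a) :=
  adjoint_apply_eq_of_denseRange hdense _ fun c => by
    rw [hlam, hip, hip, star_one, one_mul, star_star]

theorem adjoint_rightMul_apply_one (hdense : DenseRange ι)
    (hip : ∀ a b, inner ℂ (ι b) (ι a) = t (star b * a)) (htr : ∀ a b, t (a * b) = t (b * a))
    {rho : A → H →L[ℂ] H} (hrho : ∀ a b, rho a (ι b) = ι (b * a)) (a : A) :
    adjoint (rho a) (ι 1) = ι (star a) :=
  adjoint_apply_eq_of_denseRange hdense _ fun c => by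
    rw [hrho, hip, hip, star_one, one_mul, star_star, htr]

end

theorem stmt18_general (A : Type*) [Ring A] [Algebra ℂ A] [StarRing A]
    (H : Type*) [NormedAddCommGroup H] [InnerProductSpace ℂ H] [CompleteSpace H]
    (t : A →ₗ[ℂ] ℂ) (ι : A →ₗ[ℂ] H)
    (hdense : DenseRange ι)
    (hip : ∀ a b : A, (inner ℂ (ι b) (ι a) : ℂ) = t (star b * a))
    (htr : ∀ a b : A, t (a * b) = t (b * a))
    (lam : A → H →L[ℂ] H) (hlam : ∀ a b : A, lam a (ι b) = ι (a * b))
    (rho : A → H →L[ℂ] H) (hrho : ∀ a b : A, rho a (ι b) = ι (b * a))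
    (J : H → H) (hJcont : Continuous J)
    (hJ : ∀ a : A, J (ι a) = ι (star a)) :
    (∀ x' ∈ Set.centralizer (Set.centralizer (Set.centralizer (Set.range lam))),
        J (x' (ι 1)) = (star x') (ι 1)) ∧
    (∀ x' ∈ Set.centralizer (Set.centralizer (Set.centralizer (Set.range rho))),
        J (x' (ι 1)) = (star x') (ι 1)) := by
  have hJinner := inner_map_map_eq_of_denseRange hdense hJcont fun a b => by
    rw [hJ, hJ, inner_star_star_of_trace hip htr]
  have hcommutant : ∀ π : A → H →L[ℂ] H, (∀ a, π a (ι 1) = ι a) →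
      (∀ a, adjoint (π a) (ι 1) = ι (star a)) →
      ∀ x' ∈ Set.centralizer (Set.centralizer (Set.centralizer (Set.range π))),
        J (x' (ι 1)) = (star x') (ι 1) := by
    intro π hπΩ hπadj x' hx'
    rw [Set.centralizer_centralizer_centralizer] at hx'
    exact antiunitary_apply_eq_star_apply_of_commute hdense hJinner hJ π hπΩ hπadj
      fun a => hx' _ ⟨a, rfl⟩
  exact ⟨hcommutant lam (fun a => by rw [hlam, mul_one])
      (adjoint_leftMul_apply_one hdense hip hlam),
    hcommutant rho (fun a => by rw [hrho, one_mul])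
      (adjoint_rightMul_apply_one hdense hip htr hrho)⟩

/-- Let `A` be a finite pre-von Neumann algebra realized by its GNS embedding
`ι : A → H` with vacuum vector `Ω = ι 1`, representations `λ, ρ`, and modular
conjugation `J` (the bounded conjugate-linear extension of `aΩ ↦ a*Ω`).  Then for
every `x'` in the commutant of `λ(A)''` or of `ρ(A)''`, one has `J x' Ω = x'* Ω`. -/
theorem stmt18 (A : Type*) [Ring A] [Algebra ℂ A] [StarRing A]
    (H : Type*) [NormedAddCommGroup H] [InnerProductSpace ℂ H] [CompleteSpace H]
    (t : A →ₗ[ℂ] ℂ) (ι : A →ₗ[ℂ] H)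
    (hdense : DenseRange ι) (hinj : Function.Injective ι)
    (hip : ∀ a b : A, (inner ℂ (ι b) (ι a) : ℂ) = t (star b * a))
    (ht1 : t 1 = 1) (htr : ∀ a b : A, t (a * b) = t (b * a))
    (lam : A → H →L[ℂ] H) (hlam : ∀ a b : A, lam a (ι b) = ι (a * b))
    (rho : A → H →L[ℂ] H) (hrho : ∀ a b : A, rho a (ι b) = ι (b * a))
    (J : H → H) (hJcont : Continuous J)
    (hJadd : ∀ ξ η : H, J (ξ + η) = J ξ + J η)
    (hJsmul : ∀ (c : ℂ) (ξ : H), J (c • ξ) = (starRingEnd ℂ) c • J ξ)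
    (hJinvol : ∀ ξ : H, J (J ξ) = ξ)
    (hJ : ∀ a : A, J (ι a) = ι (star a)) :
    (∀ x' ∈ Set.centralizer (Set.centralizer (Set.centralizer (Set.range lam))),
        J (x' (ι 1)) = (star x') (ι 1)) ∧
    (∀ x' ∈ Set.centralizer (Set.centralizer (Set.centralizer (Set.range rho))),
        J (x' (ι 1)) = (star x') (ι 1)) :=
  stmt18_general A H t ι hdense hip htr lam hlam rho hrho J hJcont hJ
end

section
/- Let H be a Hilbert space, M ⊆ B(H) a von Neumann algebra with cyclic separating vector Ω and modular conjugation J satisfying JxΩ = x*Ω for all x ∈ M and Jx'Ω = x'*Ω for all x' ∈ M'. Then J M J = M'. -/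
/-!
Write `K T = J T J`. For `x, a, b ∈ M` one computes `(K x) (a b Ω) = a b x* Ω = a (K x) (b Ω)`,
so `K x` commutes with `M` on the dense set `M Ω`, i.e. `J M J ⊆ M'`. For `y ∈ M'`, `a ∈ M'` and
`b ∈ M`, both `(K y) a (b Ω)` and `a (K y) (b Ω)` reduce to `a (K b*) y* Ω`, using `J y' Ω = y'* Ω`
for `y' = y` and for `y' = y (K b) a* ∈ M'`; hence `J M' J ⊆ M'' = M`, and `J M J = M'` since `K`
is an involution.
-/

theorem Set.mul_mem_of_centralizer_centralizer_eq {A : Type*} [Semigroup A] {M : Set A}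
    (hM : M.centralizer.centralizer = M) {a b : A} (ha : a ∈ M) (hb : b ∈ M) : a * b ∈ M := by
  rw [← hM] at ha hb ⊢
  exact Set.mul_mem_centralizer ha hb

namespace ContinuousLinearMap

variable {H : Type*} [NormedAddCommGroup H] [InnerProductSpace ℂ H]

def antilinearConj (J : H →L⋆[ℂ] H) (T : H →L[ℂ] H) : H →L[ℂ] H := (J.comp T).comp J

@[simp]
theorem antilinearConj_apply (J : H →L⋆[ℂ] H) (T : H →L[ℂ] H) (ξ : H) :
    antilinearConj J T ξ = J (T (J ξ)) := rfl

section Involution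

variable {J : H →L⋆[ℂ] H} (hJinvol : ∀ ξ, J (J ξ) = ξ)
include hJinvol

theorem antilinear_apply_eq_antilinearConj (T : H →L[ℂ] H) (ξ : H) :
    J (T ξ) = antilinearConj J T (J ξ) := by
  rw [antilinearConj_apply, hJinvol]

theorem antilinearConj_antilinearConj (T : H →L[ℂ] H) :
    antilinearConj J (antilinearConj J T) = T := by
  ext ξ; simp [hJinvol]

theorem star_antilinearConj [CompleteSpace H]
    (hJadj : ∀ ξ η : H, (inner ℂ (J ξ) η : ℂ) = inner ℂ (J η) ξ) (T : H →L[ℂ] H) :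
    star (antilinearConj J T) = antilinearConj J (star T) := by
  rw [star_eq_adjoint, eq_comm, eq_adjoint_iff]
  intro ξ η
  calc (inner ℂ (J (star T (J ξ))) η : ℂ)
      = inner ℂ (J η) (star T (J ξ)) := hJadj _ _
    _ = inner ℂ (J (J (T (J η)))) (J ξ) := by
      rw [star_eq_adjoint, adjoint_inner_right, hJinvol]
    _ = inner ℂ ξ (J (T (J η))) := by rw [hJadj, hJinvol]

end Involution

theorem ext_of_dense_orbit {M : Set (H →L[ℂ] H)} {Ω : H}
    (hcyc : Dense ((fun x : H →L[ℂ] H => x Ω) '' M)) {S T : H →L[ℂ] H}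
    (h : ∀ b ∈ M, S (b Ω) = T (b Ω)) : S = T :=
  DFunLike.coe_injective <| Continuous.ext_on hcyc S.continuous T.continuous <| by
    rintro _ ⟨b, hb, rfl⟩; exact h b hb

section ModularConjugation

variable [CompleteSpace H]

variable {J : H →L⋆[ℂ] H} {M : Set (H →L[ℂ] H)} {Ω : H}
  (hMmul : ∀ a ∈ M, ∀ b ∈ M, a * b ∈ M) (hMstar : ∀ x ∈ M, star x ∈ M)
  (hJM : ∀ x ∈ M, J (x Ω) = star x Ω)
include hMmul hMstar hJM

theorem antilinearConj_apply_apply_of_mem {x b : H →L[ℂ] H} (hx : x ∈ M) (hb : b ∈ M) :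
    antilinearConj J x (b Ω) = b (star x Ω) := by
  rw [antilinearConj_apply, hJM b hb]
  change J ((x * star b) Ω) = _
  rw [hJM _ (hMmul x hx _ (hMstar b hb)), star_mul, star_star]
  rfl

theorem antilinearConj_mem_centralizer (hcyc : Dense ((fun x : H →L[ℂ] H => x Ω) '' M))
    {x : H →L[ℂ] H} (hx : x ∈ M) : antilinearConj J x ∈ M.centralizer := by
  intro a ha
  refine ext_of_dense_orbit hcyc fun b hb => ?_
  calc a (antilinearConj J x (b Ω)) = a (b (star x Ω)) := by
        rw [antilinearConj_apply_apply_of_mem hMmul hMstar hJM hx hb]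
    _ = antilinearConj J x (a (b Ω)) :=
        (antilinearConj_apply_apply_of_mem hMmul hMstar hJM hx (hMmul a ha b hb)).symm

theorem antilinearConj_mem_centralizer_centralizer
    (hcyc : Dense ((fun x : H →L[ℂ] H => x Ω) '' M)) (hJinvol : ∀ ξ, J (J ξ) = ξ)
    (hJadj : ∀ ξ η : H, (inner ℂ (J ξ) η : ℂ) = inner ℂ (J η) ξ)
    (hJM' : ∀ y ∈ M.centralizer, J (y Ω) = star y Ω) {y : H →L[ℂ] H} (hy : y ∈ M.centralizer) :
    antilinearConj J y ∈ M.centralizer.centralizer := by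
  intro a ha
  refine ext_of_dense_orbit hcyc fun b hb => ?_
  have hKb : antilinearConj J b ∈ M.centralizer :=
    antilinearConj_mem_centralizer hMmul hMstar hJM hcyc hb
  have hmem : y * antilinearConj J b * star a ∈ M.centralizer :=
    Set.mul_mem_centralizer (Set.mul_mem_centralizer hy hKb)
      (Set.star_mem_centralizer' hMstar ha)
  calc a (antilinearConj J y (b Ω)) = a (J (y (star b Ω))) := by
        rw [antilinearConj_apply, hJM b hb]
    _ = a (J (star b (y Ω))) := congrArg (fun z => a (J (z Ω))) (hy _ (hMstar b hb)).symm
    _ = a (antilinearConj J (star b) (star y Ω)) := by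
        rw [antilinear_apply_eq_antilinearConj hJinvol, hJM' y hy]
    _ = star (y * antilinearConj J b * star a) Ω := by
        rw [star_mul, star_mul, star_star, star_antilinearConj hJinvol hJadj]
        rfl
    _ = J (y (antilinearConj J b (J (a Ω)))) := by
        rw [← hJM' _ hmem, hJM' a ha]
        rfl
    _ = antilinearConj J y (a (b Ω)) := by
        rw [← antilinear_apply_eq_antilinearConj hJinvol b, antilinearConj_apply]
        exact congrArg (fun z => J (y (J (z Ω)))) (ha b hb)

end ModularConjugation

end ContinuousLinearMap

theorem stmt19_general (H : Type*) [NormedAddCommGroup H] [InnerProductSpace ℂ H] [CompleteSpace H]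
    (M : Set (H →L[ℂ] H))
    (hM : Set.centralizer (Set.centralizer M) = M)
    (hMstar : ∀ x ∈ M, star x ∈ M)
    (Ω : H)
    (hcyc : Dense ((fun x : H →L[ℂ] H => x Ω) '' M))
    (J : H → H) (hJcont : Continuous J)
    (hJadd : ∀ ξ η : H, J (ξ + η) = J ξ + J η)
    (hJsmul : ∀ (c : ℂ) (ξ : H), J (c • ξ) = (starRingEnd ℂ) c • J ξ)
    (hJinvol : ∀ ξ : H, J (J ξ) = ξ)
    (hJadj : ∀ ξ η : H, (inner ℂ (J ξ) η : ℂ) = inner ℂ (J η) ξ)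
    (hJM : ∀ x ∈ M, J (x Ω) = (star x) Ω)
    (hJM' : ∀ x' ∈ Set.centralizer M, J (x' Ω) = (star x') Ω) :
    {y : H →L[ℂ] H | ∃ x ∈ M, ∀ ξ : H, y ξ = J (x (J ξ))} = Set.centralizer M := by
  let J' : H →L⋆[ℂ] H := ⟨⟨⟨J, hJadd⟩, hJsmul⟩, hJcont⟩
  have hMmul : ∀ a ∈ M, ∀ b ∈ M, a * b ∈ M := fun _ ha _ hb =>
    Set.mul_mem_of_centralizer_centralizer_eq hM ha hb
  ext y
  constructor
  · rintro ⟨x, hx, hy⟩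
    obtain rfl : y = J'.antilinearConj x := ContinuousLinearMap.ext hy
    exact J'.antilinearConj_mem_centralizer hMmul hMstar hJM hcyc hx
  · intro hy
    refine ⟨J'.antilinearConj y, ?_, fun ξ => ?_⟩
    · rw [← hM]
      exact J'.antilinearConj_mem_centralizer_centralizer hMmul hMstar hJM hcyc hJinvol
        hJadj hJM' hy
    · exact (congrArg (· ξ) (J'.antilinearConj_antilinearConj hJinvol y)).symm

/-- Let `M` be a von Neumann algebra (a unital self-adjoint subset of `B(H)` equal to
its double commutant) with cyclic and separating vector `Ω`, and let `J` be a
conjugate-linear isometric involution on `H` with `J = J* = J⁻¹`, satisfying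
`J x Ω = x* Ω` for all `x ∈ M` and `J x' Ω = x'* Ω` for all `x'` in the commutant of
`M`.  Then `J M J = M'`. -/
theorem stmt19 (H : Type*) [NormedAddCommGroup H] [InnerProductSpace ℂ H] [CompleteSpace H]
    (M : Set (H →L[ℂ] H))
    (hM : Set.centralizer (Set.centralizer M) = M)
    (hMstar : ∀ x ∈ M, star x ∈ M)
    (hM1 : (1 : H →L[ℂ] H) ∈ M)
    (Ω : H)
    (hcyc : Dense ((fun x : H →L[ℂ] H => x Ω) '' M))
    (hsep : ∀ x ∈ M, x Ω = 0 → x = 0)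
    (J : H → H) (hJcont : Continuous J)
    (hJadd : ∀ ξ η : H, J (ξ + η) = J ξ + J η)
    (hJsmul : ∀ (c : ℂ) (ξ : H), J (c • ξ) = (starRingEnd ℂ) c • J ξ)
    (hJinvol : ∀ ξ : H, J (J ξ) = ξ)
    (hJadj : ∀ ξ η : H, (inner ℂ (J ξ) η : ℂ) = inner ℂ (J η) ξ)
    (hJM : ∀ x ∈ M, J (x Ω) = (star x) Ω)
    (hJM' : ∀ x' ∈ Set.centralizer M, J (x' Ω) = (star x') Ω) :
    {y : H →L[ℂ] H | ∃ x ∈ M, ∀ ξ : H, y ξ = J (x (J ξ))} = Set.centralizer M :=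
  stmt19_general H M hM hMstar Ω hcyc J hJcont hJadd hJsmul hJinvol hJadj hJM hJM'
end
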